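/- arXiv:0903.2831 — 7 statements merged into one kernel-verified Lean document; each statement's English description precedes it below -/
import Mathlib

section
/- Let λ be a partition of N with exactly 2m parts. The set SSP_λ of multisets A of partitions with at most 2 parts such that the multiset of all parts occurring in A equals λ and A is nested (no pair {ρ,σ} in A interleaves: there is no pair with ρ1 > σ1 ≥ ρ2 > σ2 > 0) is in bijection with the set of plane partitions of N of shape (m, m) whose multiset of entries is exactly the multiset of parts of λ. -/
/-!
Read a two-part partition `(t, b)` as the interval `[b, t]`; nested means that no two of these
intervals cross. A nested family `A` is sent to the multisets `T` of its larger and `B` of its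
smaller parts. It is determined by them: the smallest `t ∈ T` must be paired with the largest
`b ∈ B` below it, since otherwise the pair carrying `b` would cross the pair carrying `t`; remove
that pair and recurse. The same greedy pairing builds a nested family from `(T, B)` exactly when
`card T = card B` and, above every threshold, `B` has no more elements than `T`. For antitone
tuples that condition is the pointwise comparison of the sorted tuples, which is the column
condition of a plane partition with rows `T` and `B`. So both sides are in bijection with such
pairs `(T, B)`.
-/

namespace Multiset

section

variable {α : Type*}

theorem bind_pair_eq_map_fst_add_map_snd (A : Multiset (α × α)) :
    (A.bind fun p => {p.1, p.2}) = A.map Prod.fst + A.map Prod.snd := by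
  simp_rw [insert_eq_cons, ← singleton_add, bind_add, bind_singleton]

open Finset in
theorem countP_coe_ofFn {n : ℕ} (p : α → Prop) [DecidablePred p] (f : Fin n → α) :
    countP p (List.ofFn f : Multiset α) = #{j | p (f j)} := by
  rw [← Fin.univ_val_map, countP_map, ← filter_val, card_val]

end

variable {α : Type*} [LinearOrder α]

def IsNested (A : Multiset (α × α)) : Prop :=
  ∀ p ∈ A, ∀ q ∈ A, ¬(p.1 > q.1 ∧ q.1 ≥ p.2 ∧ p.2 > q.2)

def Dominated (B T : Multiset α) : Prop :=
  ∀ v, B.countP (v ≤ ·) ≤ T.countP (v ≤ ·)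

theorem exists_max_le_of_mem {B : Multiset α} {b₀ t : α} (hb₀ : b₀ ∈ B) (hb₀t : b₀ ≤ t) :
    ∃ b ∈ B, b ≤ t ∧ ∀ y ∈ B, y ≤ t → y ≤ b := by
  obtain ⟨b, hb, hb_max⟩ := exists_max_image id (s := B.filter (· ≤ t))
    (ne_of_mem_of_not_mem' (mem_filter.2 ⟨hb₀, hb₀t⟩) (notMem_zero _))
  exact ⟨b, (mem_filter.1 hb).1, (mem_filter.1 hb).2,
    fun y hy hyt => hb_max y (mem_filter.2 ⟨hy, hyt⟩)⟩

theorem IsNested.of_le {A A' : Multiset (α × α)} (hA : IsNested A) (h : A' ≤ A) : IsNested A' :=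
  fun p hp q hq => hA p (mem_of_le h hp) q (mem_of_le h hq)

theorem IsNested.cons {A : Multiset (α × α)} {t b : α} (hA : IsNested A)
    (ht : ∀ p ∈ A, t ≤ p.1) (hb : ∀ p ∈ A, p.2 ≤ t → p.2 ≤ b) : IsNested ((t, b) ::ₘ A) := by
  intro p hp q hq ⟨h₁, h₂, h₃⟩
  rcases mem_cons.1 hp with rfl | hp <;> rcases mem_cons.1 hq with rfl | hq
  · exact lt_irrefl _ h₁
  · exact (ht q hq).not_gt h₁
  · exact (hb p hp h₂).not_gt h₃
  · exact hA p hp q hq ⟨h₁, h₂, h₃⟩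

theorem IsNested.mem_of_min_of_max {A : Multiset (α × α)} (hle : ∀ p ∈ A, p.2 ≤ p.1)
    (hA : IsNested A) {t b : α} (ht : t ∈ A.map Prod.fst) (ht_min : ∀ x ∈ A.map Prod.fst, t ≤ x)
    (hb : b ∈ A.map Prod.snd) (hbt : b ≤ t) (hb_max : ∀ y ∈ A.map Prod.snd, y ≤ t → y ≤ b) :
    (t, b) ∈ A := by
  obtain ⟨r, hr, rfl⟩ := mem_map.1 ht
  obtain ⟨q, hq, rfl⟩ := mem_map.1 hb
  rcases (hb_max _ (mem_map_of_mem _ hr) (hle r hr)).eq_or_lt with hrq | hrq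
  · rwa [← hrq]
  rcases (ht_min _ (mem_map_of_mem _ hq)).eq_or_lt with hqr | hqr
  · rwa [hqr]
  · exact (hA q hq r hr ⟨hqr, hbt, hrq⟩).elim

theorem IsNested.eq_of_map_eq {A A' : Multiset (α × α)} (hle : ∀ p ∈ A, p.2 ≤ p.1)
    (hle' : ∀ p ∈ A', p.2 ≤ p.1) (hA : IsNested A) (hA' : IsNested A')
    (hfst : A.map Prod.fst = A'.map Prod.fst) (hsnd : A.map Prod.snd = A'.map Prod.snd) :
    A = A' := by
  induction A using strongInductionOn generalizing A' with
  | ih A ih =>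
  rcases eq_or_ne A 0 with rfl | hA0
  · exact (map_eq_zero.1 (hfst.symm.trans (map_zero _))).symm
  obtain ⟨t, ht, ht_min⟩ := exists_min_image id (mt map_eq_zero.1 hA0 : A.map Prod.fst ≠ 0)
  obtain ⟨r, hr, rfl⟩ := mem_map.1 ht
  obtain ⟨b, hb, hbt, hb_max⟩ := exists_max_le_of_mem (mem_map_of_mem Prod.snd hr) (hle r hr)
  have hmem : ∀ C : Multiset (α × α), (∀ p ∈ C, p.2 ≤ p.1) → IsNested C →
      C.map Prod.fst = A.map Prod.fst → C.map Prod.snd = A.map Prod.snd → (r.1, b) ∈ C :=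
    fun C hCle hC h₁ h₂ =>
      hC.mem_of_min_of_max hCle (h₁ ▸ ht) (h₁ ▸ ht_min) (h₂ ▸ hb) hbt (h₂ ▸ hb_max)
  obtain ⟨E, rfl⟩ := exists_cons_of_mem (hmem _ hle hA rfl rfl)
  obtain ⟨E', rfl⟩ := exists_cons_of_mem (hmem _ hle' hA' hfst.symm hsnd.symm)
  rw [map_cons, map_cons, cons_inj_right] at hfst hsnd
  rw [ih E (lt_cons_self _ _) (fun p hp => hle p (mem_cons_of_mem hp))
    (fun p hp => hle' p (mem_cons_of_mem hp)) (hA.of_le (le_cons_self _ _))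
    (hA'.of_le (le_cons_self _ _)) hfst hsnd]

theorem dominated_map_snd_map_fst {A : Multiset (α × α)} (hle : ∀ p ∈ A, p.2 ≤ p.1) :
    Dominated (A.map Prod.snd) (A.map Prod.fst) := by
  intro v
  induction A using Multiset.induction_on with
  | empty => simp
  | cons a A ih =>
    have ha := hle a (mem_cons_self a A)
    have := ih fun p hp => hle p (mem_cons_of_mem hp)
    simp only [map_cons, countP_cons]
    split_ifs with h₁ h₂ <;> first | omega | exact absurd (h₁.trans ha) h₂

theorem Dominated.of_cons {B T : Multiset α} {b t : α} (h : Dominated (b ::ₘ B) (t ::ₘ T))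
    (hcard : card B = card T) (hbt : b ≤ t) (ht : ∀ x ∈ T, t ≤ x) : Dominated B T := by
  intro v
  have hv := h v
  rw [countP_cons, countP_cons] at hv
  by_cases hvb : v ≤ b
  · simp only [hvb, hvb.trans hbt, if_true] at hv
    omega
  by_cases hvt : v ≤ t
  · calc B.countP (v ≤ ·) ≤ card B := countP_le_card _ _
      _ = T.countP (v ≤ ·) := hcard.trans (countP_eq_card.2 fun x hx => hvt.trans (ht x hx)).symm
  · simpa [hvb, hvt] using hv

theorem Dominated.exists_le {B T : Multiset α} (h : Dominated B T) (hcard : card T = card B)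
    {t : α} (ht : t ∈ T) : ∃ b ∈ B, b ≤ t := by
  by_contra! hB
  obtain ⟨β, hβ, hβ_min⟩ := exists_min_image id
    (card_pos.1 (hcard ▸ card_pos_iff_exists_mem.2 ⟨t, ht⟩) : B ≠ 0)
  have hBβ : B.countP (β ≤ ·) = card B := countP_eq_card.2 hβ_min
  have hTβ : T.countP (β ≤ ·) ≠ card T := fun hT => (hB β hβ).not_ge (countP_eq_card.1 hT t ht)
  have := h β
  have := countP_le_card (β ≤ ·) T
  omega

theorem exists_isNested_of_dominated {B T : Multiset α} (h : Dominated B T)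
    (hcard : card T = card B) :
    ∃ A : Multiset (α × α), (∀ p ∈ A, p.2 ≤ p.1) ∧ IsNested A ∧
      A.map Prod.fst = T ∧ A.map Prod.snd = B := by
  induction T using strongInductionOn generalizing B with
  | ih T ih =>
  rcases eq_or_ne T 0 with rfl | hT0
  · exact ⟨0, by simp, fun _ h => by simp at h, rfl, (card_eq_zero.1 hcard.symm).symm⟩
  obtain ⟨t, ht, ht_min⟩ := exists_min_image id hT0
  obtain ⟨b₀, hb₀, hb₀t⟩ := h.exists_le hcard ht
  obtain ⟨b, hb, hbt, hb_max⟩ := exists_max_le_of_mem hb₀ hb₀t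
  obtain ⟨T', rfl⟩ := exists_cons_of_mem ht
  obtain ⟨B', rfl⟩ := exists_cons_of_mem hb
  rw [card_cons, card_cons, Nat.add_right_cancel_iff] at hcard
  have ht' : ∀ x ∈ T', t ≤ x := fun x hx => ht_min x (mem_cons_of_mem hx)
  obtain ⟨A, hle, hA, rfl, rfl⟩ := ih T' (lt_cons_self _ _) (h.of_cons hcard.symm hbt ht') hcard
  refine ⟨(t, b) ::ₘ A, ?_, hA.cons (forall_mem_map_iff.1 ht') ?_, by simp, by simp⟩
  · simpa [hbt] using hle
  · exact fun p hp hpt => hb_max p.2 (mem_cons_of_mem (mem_map_of_mem _ hp)) hpt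

theorem exists_antitone_coe_ofFn_eq {n : ℕ} (S : Multiset α) (h : card S = n) :
    ∃ f : Fin n → α, Antitone f ∧ (List.ofFn f : Multiset α) = S := by
  have hlen : (S.sort (· ≥ ·)).length = n := by rw [length_sort, h]
  subst hlen
  exact ⟨_, (pairwise_sort S _).sortedGE.antitone_get, by rw [List.ofFn_get, sort_eq]⟩

end Multiset

namespace Antitone

open Finset

variable {α : Type*} [LinearOrder α] {n : ℕ} {f g : Fin n → α}

theorem le_iff_dominated (hf : Antitone f) (hg : Antitone g) :
    g ≤ f ↔ Multiset.Dominated (List.ofFn g : Multiset α) (List.ofFn f) := by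
  simp only [Multiset.Dominated, Multiset.countP_coe_ofFn]
  refine ⟨fun h v => card_le_card fun j => ?_, fun h j => ?_⟩
  · simpa using fun hj => hj.trans (h j)
  by_contra! hlt
  -- By dominance at least `j + 1` indices `k` satisfy `g j ≤ f k`; if `f j < g j`, all are `< j`.
  have hsub : ({k | g j ≤ f k} : Finset (Fin n)) ⊆ Iio j := fun k hk => by
    simp only [mem_filter_univ] at hk
    exact mem_Iio.2 (lt_of_not_ge fun hjk => (hf hjk).not_gt (hlt.trans_le hk))
  have hsup : Iic j ⊆ ({k | g j ≤ g k} : Finset (Fin n)) := fun k hk =>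
    (mem_filter_univ k).2 (hg (mem_Iic.1 hk))
  have := (card_le_card hsup).trans ((h (g j)).trans (card_le_card hsub))
  rw [Fin.card_Iic, Fin.card_Iio] at this
  omega

theorem eq_of_coe_ofFn_eq (hf : Antitone f) (hg : Antitone g)
    (h : (List.ofFn f : Multiset α) = List.ofFn g) : f = g :=
  List.ofFn_injective <| (Multiset.coe_eq_coe.1 h).eq_of_sortedGE hf.sortedGE_ofFn hg.sortedGE_ofFn

end Antitone

open Multiset

section RowContents

variable (m : ℕ) (l : List ℕ)

def NestedFamily : Type :=
  {A : Multiset (ℕ × ℕ) // (∀ p ∈ A, p.2 ≤ p.1 ∧ 0 < p.2) ∧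
    (A.bind fun p => {p.1, p.2}) = (l : Multiset ℕ) ∧ A.IsNested}

def TwoRowPlanePartition : Type :=
  {P : Fin 2 → Fin m → ℕ // (∀ i j, 0 < P i j) ∧ (∀ i, Antitone (P i)) ∧ P 1 ≤ P 0 ∧
    ((List.ofFn (P 0) ++ List.ofFn (P 1) : List ℕ) : Multiset ℕ) = (l : Multiset ℕ)}

/-- The possible contents `(T, B)` of the top and bottom rows. -/
def RowContents : Type :=
  {TB : Multiset ℕ × Multiset ℕ // (∀ b ∈ TB.2, 0 < b) ∧ TB.1 + TB.2 = (l : Multiset ℕ) ∧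
    card TB.1 = card TB.2 ∧ TB.2.Dominated TB.1}

variable {m l}

def NestedFamily.rowContents (A : NestedFamily l) : RowContents l :=
  ⟨(A.1.map Prod.fst, A.1.map Prod.snd),
    forall_mem_map_iff.2 fun p hp => (A.2.1 p hp).2,
    (bind_pair_eq_map_fst_add_map_snd A.1).symm.trans A.2.2.1,
    by simp only [card_map],
    dominated_map_snd_map_fst fun p hp => (A.2.1 p hp).1⟩

theorem NestedFamily.rowContents_bijective :
    Function.Bijective (NestedFamily.rowContents (l := l)) := by
  refine ⟨fun ⟨A, hA, _, hAn⟩ ⟨A', hA', _, hA'n⟩ h => ?_, fun ⟨(T, B), hpos, hl, hcard, hdom⟩ => ?_⟩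
  · obtain ⟨hfst, hsnd⟩ := Prod.ext_iff.1 (congrArg Subtype.val h)
    exact Subtype.ext (hAn.eq_of_map_eq (fun p hp => (hA p hp).1) (fun p hp => (hA' p hp).1)
      hA'n hfst hsnd)
  obtain ⟨A, hle, hA, rfl, rfl⟩ := exists_isNested_of_dominated hdom hcard
  refine ⟨⟨A, fun p hp => ⟨hle p hp, hpos _ (mem_map_of_mem _ hp)⟩, ?_, hA⟩, rfl⟩
  rwa [bind_pair_eq_map_fst_add_map_snd]

def TwoRowPlanePartition.rowContents (P : TwoRowPlanePartition m l) : RowContents l :=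
  ⟨((List.ofFn (P.1 0) : Multiset ℕ), (List.ofFn (P.1 1) : Multiset ℕ)),
    fun b hb => by
      obtain ⟨j, rfl⟩ := List.mem_ofFn.1 (mem_coe.1 hb)
      exact P.2.1 1 j,
    by rw [coe_add]; exact P.2.2.2.2,
    by simp only [coe_card, List.length_ofFn],
    ((P.2.2.1 0).le_iff_dominated (P.2.2.1 1)).1 P.2.2.2.1⟩

theorem TwoRowPlanePartition.rowContents_bijective (hlen : l.length = 2 * m) :
    Function.Bijective (TwoRowPlanePartition.rowContents (m := m) (l := l)) := by
  refine ⟨fun ⟨P, _, hP, _⟩ ⟨P', _, hP', _⟩ h => ?_, fun ⟨(T, B), hpos, hl, hcard, hdom⟩ => ?_⟩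
  · obtain ⟨h₀, h₁⟩ := Prod.ext_iff.1 (congrArg Subtype.val h)
    exact Subtype.ext (funext (Fin.forall_fin_two.2
      ⟨(hP 0).eq_of_coe_ofFn_eq (hP' 0) h₀, (hP 1).eq_of_coe_ofFn_eq (hP' 1) h₁⟩))
  dsimp only at hpos hl hcard hdom
  have hcardB : card B = m := by
    have := congrArg card hl
    rw [card_add, coe_card, hlen] at this
    omega
  obtain ⟨f, hf, rfl⟩ := exists_antitone_coe_ofFn_eq T (hcard.trans hcardB)
  obtain ⟨g, hg, rfl⟩ := exists_antitone_coe_ofFn_eq B hcardB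
  have hgf : g ≤ f := (hf.le_iff_dominated hg).2 hdom
  have hg_pos : ∀ j, 0 < g j := fun j => hpos _ (mem_coe.2 (List.mem_ofFn.2 ⟨j, rfl⟩))
  refine ⟨⟨![f, g], ?_, Fin.forall_fin_two.2 ⟨hf, hg⟩, hgf, by rw [← coe_add]; exact hl⟩, rfl⟩
  exact Fin.forall_fin_two.2 ⟨fun j => (hg_pos j).trans_le (hgf j), hg_pos⟩

end RowContents

theorem nested_pairs_equiv_plane_partitions_general (m : ℕ) (l : List ℕ) (hlen : l.length = 2 * m) :
    Nonempty (
      {A : Multiset (ℕ × ℕ) //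
        (∀ p ∈ A, p.2 ≤ p.1 ∧ 0 < p.2) ∧
        (A.bind fun p => {p.1, p.2}) = (l : Multiset ℕ) ∧
        (∀ p ∈ A, ∀ q ∈ A, ¬(p.1 > q.1 ∧ q.1 ≥ p.2 ∧ p.2 > q.2))}
      ≃
      {P : Fin 2 → Fin m → ℕ //
        (∀ i j, 0 < P i j) ∧
        (∀ i, ∀ j k : Fin m, j ≤ k → P i k ≤ P i j) ∧
        (∀ j, P 1 j ≤ P 0 j) ∧
        ((List.ofFn (P 0) ++ List.ofFn (P 1) : List ℕ) : Multiset ℕ) = (l : Multiset ℕ)}) :=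
  ⟨(Equiv.ofBijective _ NestedFamily.rowContents_bijective).trans
    (Equiv.ofBijective _ (TwoRowPlanePartition.rowContents_bijective hlen)).symm⟩

/-- Proposition 3.4: if `λ ⊢ N` has `2m` parts, the nested multisets `A` of two-part
partitions with part-multiset `λ` are in bijection with the plane partitions of `N`
of shape `(m, m)` whose entries are the parts of `λ`. -/
theorem nested_pairs_equiv_plane_partitions (N m : ℕ) (l : List ℕ)
    (hsort : l.Pairwise (· ≥ ·)) (hpos : ∀ x ∈ l, 0 < x)
    (hsum : l.sum = N) (hlen : l.length = 2 * m) :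
    Nonempty (
      {A : Multiset (ℕ × ℕ) //
        (∀ p ∈ A, p.2 ≤ p.1 ∧ 0 < p.2) ∧
        (A.bind fun p => {p.1, p.2}) = (l : Multiset ℕ) ∧
        (∀ p ∈ A, ∀ q ∈ A, ¬(p.1 > q.1 ∧ q.1 ≥ p.2 ∧ p.2 > q.2))}
      ≃
      {P : Fin 2 → Fin m → ℕ //
        (∀ i j, 0 < P i j) ∧
        (∀ i, ∀ j k : Fin m, j ≤ k → P i k ≤ P i j) ∧
        (∀ j, P 1 j ≤ P 0 j) ∧
        ((List.ofFn (P 0) ++ List.ofFn (P 1) : List ℕ) : Multiset ℕ) = (l : Multiset ℕ)}) :=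
  nested_pairs_equiv_plane_partitions_general m l hlen
end

section
/- Let λ be a partition of N with 2k−1 distinct parts. Then the number of nested collections A consisting of one singleton part and k−1 pairs, using each part of λ exactly once, such that no pair (a, b) and singleton (c) satisfy a ≥ c ≥ b, and no two pairs (a, b), (c, d) satisfy a > c ≥ b > d, equals the Catalan number C_k. -/
/-!
Encoding the singleton `(c)` as the pair `(c, 0)` turns a nested collection into a noncrossing
perfect matching of the `2k` points `{0} ∪ λ`; condition (i) says precisely that the pair `(c, 0)`
crosses no other pair. Noncrossing perfect matchings of `2n` points of a line are counted by `C_n`: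
the smallest point is matched to some `a`, and then the points between them and the points beyond
`a` are matched among themselves, independently. Only an even number `2i` of points can lie
between, so the count satisfies Segner's recursion `C_{n+1} = ∑ C_i C_{n-i}`.
-/

open Finset

variable {α : Type*}

lemma sum_range_two_mul_add_one_of_odd_eq_zero {M : Type*} [AddCommMonoid M] (F : ℕ → M)
    (hF : ∀ i, F (2 * i + 1) = 0) (n : ℕ) :
    ∑ j ∈ range (2 * n + 1), F j = ∑ i ∈ range (n + 1), F (2 * i) := by
  induction n with
  | zero => simp
  | succ n ih =>
    rw [show 2 * (n + 1) + 1 = 2 * n + 1 + 1 + 1 by ring, sum_range_succ, sum_range_succ, ih,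
      hF, add_zero, sum_range_succ _ (n + 1), mul_add_one]

def pairEndpoints (A : Finset (α × α)) : Multiset α :=
  A.val.bind fun p => {p.1, p.2}

lemma mem_pairEndpoints {A : Finset (α × α)} {x : α} :
    x ∈ pairEndpoints A ↔ ∃ p ∈ A, x = p.1 ∨ x = p.2 := by
  simp only [pairEndpoints, Multiset.mem_bind, Finset.mem_val, Multiset.insert_eq_cons,
    Multiset.mem_cons, Multiset.mem_singleton]

section LinearOrder

variable [LinearOrder α] {m a : α} {T : Finset α}

lemma insert_filter_lt_union_filter_gt (ha : a ∈ T) :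
    insert a ({x ∈ T | x < a} ∪ {x ∈ T | a < x}) = T := by
  ext x
  simp only [mem_insert, mem_union, mem_filter]
  rcases lt_trichotomy x a with hxa | rfl | hxa <;> grind

lemma card_filter_lt_add_card_filter_gt (ha : a ∈ T) :
    #{x ∈ T | x < a} + #{x ∈ T | a < x} + 1 = #T := by
  conv_rhs => rw [← insert_filter_lt_union_filter_gt ha]
  rw [card_insert_of_notMem (by simp), card_union_of_disjoint
    (disjoint_filter.2 fun x _ h₁ h₂ => lt_asymm h₁ h₂)]

lemma sum_card_filter_lt {M : Type*} [AddCommMonoid M] (F : ℕ → M) :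
    ∑ a ∈ T, F #{x ∈ T | x < a} = ∑ j ∈ range #T, F j := by
  have hmono : StrictMonoOn (fun a => #{x ∈ T | x < a}) T := fun a ha b _ hab =>
    card_lt_card <| (ssubset_iff_of_subset (monotone_filter_right _ fun _ _ hx => hx.trans hab)).2
      ⟨a, mem_filter.2 ⟨ha, hab⟩, fun h => lt_irrefl a (mem_filter.1 h).2⟩
  have himage : T.image (fun a => #{x ∈ T | x < a}) = range #T := by
    refine eq_of_subset_of_card_le (fun j hj => ?_) ?_
    · obtain ⟨a, ha, rfl⟩ := mem_image.1 hj
      exact mem_range.2 (card_lt_card (filter_ssubset.2 ⟨a, ha, lt_irrefl a⟩))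
    · rw [card_range, card_image_of_injOn hmono.injOn]
  rw [← himage, sum_image hmono.injOn]

-- The paper's `a > c ≥ b > d`; on distinct endpoints this is the usual `q.2 < p.2 < q.1 < p.1`.
def Crosses (p q : α × α) : Prop :=
  q.1 < p.1 ∧ p.2 ≤ q.1 ∧ q.2 < p.2

structure IsNoncrossingMatching (S : Finset α) (A : Finset (α × α)) : Prop where
  snd_lt_fst : ∀ p ∈ A, p.2 < p.1
  pairEndpoints_eq : pairEndpoints A = S.val
  not_crosses : ∀ p ∈ A, ∀ q ∈ A, ¬Crosses p q

namespace IsNoncrossingMatching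

variable {S : Finset α} {A : Finset (α × α)}

lemma mem_iff (h : IsNoncrossingMatching S A) {x : α} : x ∈ S ↔ ∃ p ∈ A, x = p.1 ∨ x = p.2 := by
  rw [← mem_pairEndpoints, h.pairEndpoints_eq, Finset.mem_val]

lemma fst_mem (h : IsNoncrossingMatching S A) {p : α × α} (hp : p ∈ A) : p.1 ∈ S :=
  h.mem_iff.2 ⟨p, hp, .inl rfl⟩

lemma snd_mem (h : IsNoncrossingMatching S A) {p : α × α} (hp : p ∈ A) : p.2 ∈ S :=
  h.mem_iff.2 ⟨p, hp, .inr rfl⟩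

lemma eq_of_endpoint (h : IsNoncrossingMatching S A) {p q : α × α} (hp : p ∈ A) (hq : q ∈ A)
    {x : α} (hxp : x = p.1 ∨ x = p.2) (hxq : x = q.1 ∨ x = q.2) : p = q := by
  by_contra hne
  have hnodup : (pairEndpoints A).Nodup := h.pairEndpoints_eq ▸ S.nodup
  rw [pairEndpoints, ← Multiset.cons_erase hp, Multiset.cons_bind, Multiset.nodup_add] at hnodup
  have hx : x ∈ ({p.1, p.2} : Multiset α) := by rcases hxp with rfl | rfl <;> simp
  refine Multiset.disjoint_left.1 hnodup.2.2 hx (Multiset.mem_bind.2 ⟨q, ?_, ?_⟩)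
  · exact (Multiset.mem_erase_of_ne (Ne.symm hne)).2 hq
  · rcases hxq with rfl | rfl <;> simp

lemma card_eq (h : IsNoncrossingMatching S A) : #S = 2 * #A := by
  have := congrArg Multiset.card h.pairEndpoints_eq
  simp only [pairEndpoints, Multiset.card_bind, Function.comp_def, Multiset.insert_eq_cons,
    Multiset.card_cons, Multiset.card_singleton, Multiset.map_const', Multiset.sum_replicate,
    smul_eq_mul] at this
  rw [Finset.card, Finset.card, ← this, mul_comm]

lemma restrict (h : IsNoncrossingMatching S A) {T : Finset α} (hTS : T ⊆ S)
    (hT : ∀ p ∈ A, p.1 ∈ T ↔ p.2 ∈ T) : IsNoncrossingMatching T {p ∈ A | p.1 ∈ T} where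
  snd_lt_fst p hp := h.snd_lt_fst p (mem_filter.1 hp).1
  pairEndpoints_eq := by
    have hfilter : (pairEndpoints A).filter (· ∈ T) = pairEndpoints {p ∈ A | p.1 ∈ T} := by
      rw [pairEndpoints, pairEndpoints, Multiset.filter_bind, Finset.filter_val,
        Multiset.bind_filter]
      refine Multiset.bind_congr fun p hp => ?_
      by_cases hp1 : p.1 ∈ T
      · simp [hp1, (hT p hp).1 hp1]
      · simp [hp1, mt (hT p hp).2 hp1]
    rw [← hfilter, h.pairEndpoints_eq, ← Finset.filter_val, Finset.filter_mem_eq_inter,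
      Finset.inter_eq_right.2 hTS]
  not_crosses p hp q hq := h.not_crosses p (mem_filter.1 hp).1 q (mem_filter.1 hq).1

lemma union {S₁ S₂ : Finset α} {A₁ A₂ : Finset (α × α)} (h₁ : IsNoncrossingMatching S₁ A₁)
    (h₂ : IsNoncrossingMatching S₂ A₂) (hS : Disjoint S₁ S₂)
    (hcross : ∀ p ∈ A₁, ∀ q ∈ A₂, ¬Crosses p q ∧ ¬Crosses q p) :
    IsNoncrossingMatching (S₁ ∪ S₂) (A₁ ∪ A₂) where
  snd_lt_fst p hp := (mem_union.1 hp).elim (h₁.snd_lt_fst p) (h₂.snd_lt_fst p)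
  pairEndpoints_eq := by
    have hA : Disjoint A₁ A₂ := Finset.disjoint_left.2 fun p hp₁ hp₂ =>
      Finset.disjoint_left.1 hS (h₁.fst_mem hp₁) (h₂.fst_mem hp₂)
    rw [← disjUnion_eq_union _ _ hA, ← disjUnion_eq_union _ _ hS, pairEndpoints,
      disjUnion_val, disjUnion_val, Multiset.add_bind, ← pairEndpoints, ← pairEndpoints,
      h₁.pairEndpoints_eq, h₂.pairEndpoints_eq]
  not_crosses p hp q hq := by
    rcases mem_union.1 hp with hp | hp <;> rcases mem_union.1 hq with hq | hq
    exacts [h₁.not_crosses p hp q hq, (hcross p hp q hq).1, (hcross q hq p hp).2,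
      h₂.not_crosses p hp q hq]

lemma pair {a b : α} (hba : b < a) : IsNoncrossingMatching {a, b} {(a, b)} where
  snd_lt_fst p hp := by simp_all
  pairEndpoints_eq := by simp [pairEndpoints, Finset.insert_val, hba.ne']
  not_crosses p hp q hq := by simp_all [Crosses]

lemma exists_partner_of_forall_lt (hm : ∀ x ∈ T, m < x)
    (h : IsNoncrossingMatching (insert m T) A) : ∃ a ∈ T, (a, m) ∈ A := by
  obtain ⟨p, hp, hmp⟩ := h.mem_iff.1 (mem_insert_self m T)
  have hm₂ : m ≤ p.2 := (mem_insert.1 (h.snd_mem hp)).elim (·.ge) (hm _ · |>.le)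
  have hlt := h.snd_lt_fst p hp
  obtain rfl : m = p.2 := hmp.resolve_left (by order)
  exact ⟨p.1, (mem_insert.1 (h.fst_mem hp)).resolve_left hlt.ne', hp⟩

lemma partner_block (hm : ∀ x ∈ T, m < x) (h : IsNoncrossingMatching (insert m T) A)
    (ha : (a, m) ∈ A) {p : α × α} (hp : p ∈ A) (hne : p ≠ (a, m)) :
    p.1 ∈ T ∧ p.2 ∈ T ∧ (p.1 < a ∨ a < p.2) := by
  have hne' {x : α} (hx : x = p.1 ∨ x = p.2) (hxa : x = a ∨ x = m) : False :=
    hne (h.eq_of_endpoint hp ha hx hxa)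
  have h₁ : p.1 ∈ T := (mem_insert.1 (h.fst_mem hp)).resolve_left (hne' (.inl rfl) <| .inr ·)
  have h₂ : p.2 ∈ T := (mem_insert.1 (h.snd_mem hp)).resolve_left (hne' (.inr rfl) <| .inr ·)
  refine ⟨h₁, h₂, (lt_or_gt_of_ne fun e => hne' (.inl rfl) (.inl e)).imp_right fun hap => ?_⟩
  by_contra hpa
  have hpa' : p.2 ≠ a := fun e => hne' (.inr rfl) (.inl e)
  exact h.not_crosses p hp _ ha ⟨hap, by order, hm _ h₂⟩

lemma restrict_filter_lt_filter_gt (hm : ∀ x ∈ T, m < x)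
    (h : IsNoncrossingMatching (insert m T) A) (ha : (a, m) ∈ A) :
    IsNoncrossingMatching {x ∈ T | x < a} {p ∈ A | p.1 ∈ {x ∈ T | x < a}} ∧
      IsNoncrossingMatching {x ∈ T | a < x} {p ∈ A | p.1 ∈ {x ∈ T | a < x}} := by
  constructor <;> refine h.restrict ((filter_subset _ T).trans (subset_insert m T)) fun p hp => ?_
  all_goals
    by_cases hne : p = (a, m)
    · subst hne
      simp [(hm m).mt (lt_irrefl m)]
    · obtain ⟨h₁, h₂, hblock⟩ := h.partner_block hm ha hp hne
      have := h.snd_lt_fst p hp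
      simp only [mem_filter, h₁, h₂, true_and]
      rcases hblock with hb | hb <;> constructor <;> intro <;> order

lemma insert_partner_filter_union (hm : ∀ x ∈ T, m < x)
    (h : IsNoncrossingMatching (insert m T) A) (ha : (a, m) ∈ A) :
    insert (a, m) ({p ∈ A | p.1 ∈ {x ∈ T | x < a}} ∪ {p ∈ A | p.1 ∈ {x ∈ T | a < x}}) = A := by
  ext p
  by_cases hne : p = (a, m)
  · simp [hne, ha]
  simp only [mem_insert, hne, false_or, mem_union, mem_filter, ← and_or_left,
    and_iff_left_iff_imp]
  intro hp
  obtain ⟨h₁, -, hblock⟩ := h.partner_block hm ha hp hne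
  have := h.snd_lt_fst p hp
  exact ⟨h₁, hblock.imp_right fun hb => by order⟩

end IsNoncrossingMatching

lemma isNoncrossingMatching_insert_partner (hm : ∀ x ∈ T, m < x) (ha : a ∈ T)
    {B C : Finset (α × α)} (hB : IsNoncrossingMatching {x ∈ T | x < a} B)
    (hC : IsNoncrossingMatching {x ∈ T | a < x} C) :
    IsNoncrossingMatching (insert m T) (insert (a, m) (B ∪ C)) := by
  have hB' : ∀ p ∈ B, m < p.2 ∧ p.2 < p.1 ∧ p.1 < a := fun p hp => by
    have h₁ := mem_filter.1 (hB.fst_mem hp)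
    have h₂ := mem_filter.1 (hB.snd_mem hp)
    exact ⟨hm _ h₂.1, hB.snd_lt_fst p hp, h₁.2⟩
  have hC' : ∀ q ∈ C, a < q.2 ∧ q.2 < q.1 := fun q hq =>
    ⟨(mem_filter.1 (hC.snd_mem hq)).2, hC.snd_lt_fst q hq⟩
  have hT : insert m T = {a, m} ∪ ({x ∈ T | x < a} ∪ {x ∈ T | a < x}) := by
    rw [insert_union, ← insert_eq, insert_comm, insert_filter_lt_union_filter_gt ha]
  rw [hT, insert_eq]
  refine (IsNoncrossingMatching.pair (hm a ha)).union (hB.union hC ?_ ?_) ?_ ?_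
  · exact disjoint_left.2 fun x h₁ h₂ => by simp only [mem_filter] at h₁ h₂; order
  · intro p hp q hq
    obtain ⟨-, -, hp⟩ := hB' p hp
    obtain ⟨hq, -⟩ := hC' q hq
    constructor <;> rintro ⟨_, _, _⟩ <;> order
  · refine disjoint_left.2 fun x h₁ h₂ => ?_
    have := hm a ha
    simp only [mem_insert, mem_singleton, mem_union, mem_filter] at h₁ h₂
    rcases h₁ with rfl | rfl <;> grind
  · intro p hp q hq
    obtain rfl := mem_singleton.1 hp
    rcases mem_union.1 hq with hq | hq
    · obtain ⟨_, _, _⟩ := hB' q hq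
      constructor <;> rintro ⟨_, _, _⟩ <;> order
    · obtain ⟨_, _⟩ := hC' q hq
      constructor <;> rintro ⟨_, _, _⟩ <;> order

lemma filter_insert_partner_union {B C : Finset (α × α)}
    (hB : IsNoncrossingMatching {x ∈ T | x < a} B) (hC : IsNoncrossingMatching {x ∈ T | a < x} C) :
    ({p ∈ insert (a, m) (B ∪ C) | p.1 ∈ {x ∈ T | x < a}},
      {p ∈ insert (a, m) (B ∪ C) | p.1 ∈ {x ∈ T | a < x}}) = (B, C) := by
  have hB' p (hp : p ∈ B) := mem_filter.1 (hB.fst_mem hp)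
  have hC' p (hp : p ∈ C) := mem_filter.1 (hC.fst_mem hp)
  ext p
  · simp only [mem_filter, mem_insert, mem_union]
    constructor
    · rintro ⟨rfl | hp | hp, -, hpa⟩
      exacts [absurd hpa (lt_irrefl a), hp, absurd (hC' p hp).2 hpa.not_gt]
    · exact fun hp => ⟨.inr (.inl hp), hB' p hp⟩
  · simp only [mem_filter, mem_insert, mem_union]
    constructor
    · rintro ⟨rfl | hp | hp, -, hpa⟩
      exacts [absurd hpa (lt_irrefl a), absurd (hB' p hp).2 hpa.not_gt, hp]
    · exact fun hp => ⟨.inr (.inr hp), hC' p hp⟩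

open Classical in
noncomputable def noncrossingMatchings (S : Finset α) : Finset (Finset (α × α)) :=
  {A ∈ (S ×ˢ S).powerset | IsNoncrossingMatching S A}

lemma mem_noncrossingMatchings {S : Finset α} {A : Finset (α × α)} :
    A ∈ noncrossingMatchings S ↔ IsNoncrossingMatching S A := by
  classical
  rw [noncrossingMatchings, mem_filter, mem_powerset, and_iff_right_iff_imp]
  exact fun h p hp => mem_product.2 ⟨h.fst_mem hp, h.snd_mem hp⟩

lemma noncrossingMatchings_empty : noncrossingMatchings (∅ : Finset α) = {∅} := by
  ext A
  rw [mem_noncrossingMatchings, mem_singleton]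
  refine ⟨fun h => card_eq_zero.1 (by simpa using h.card_eq.symm), ?_⟩
  rintro rfl
  exact ⟨by simp, by simp [pairEndpoints], by simp⟩

lemma card_noncrossingMatchings_of_odd {S : Finset α} (hS : Odd #S) :
    #(noncrossingMatchings S) = 0 :=
  card_eq_zero.2 <| eq_empty_of_forall_notMem fun A hA =>
    Nat.not_even_iff_odd.2 hS ⟨#A, (mem_noncrossingMatchings.1 hA).card_eq.trans (two_mul _)⟩

lemma card_filter_partner_mem (hm : ∀ x ∈ T, m < x) (ha : a ∈ T) :
    #{A ∈ noncrossingMatchings (insert m T) | (a, m) ∈ A} =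
      #(noncrossingMatchings {x ∈ T | x < a}) * #(noncrossingMatchings {x ∈ T | a < x}) := by
  rw [← card_product]
  refine card_nbij' (fun A => ({p ∈ A | p.1 ∈ {x ∈ T | x < a}}, {p ∈ A | p.1 ∈ {x ∈ T | a < x}}))
    (fun BC => insert (a, m) (BC.1 ∪ BC.2)) ?_ ?_ ?_ ?_
  · intro A hA
    obtain ⟨hA, hamA⟩ := mem_filter.1 hA
    simp only [mem_coe, mem_product, mem_noncrossingMatchings] at hA ⊢
    exact hA.restrict_filter_lt_filter_gt hm hamA
  · rintro ⟨B, C⟩ hBC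
    simp only [mem_coe, mem_product, mem_noncrossingMatchings] at hBC
    exact mem_filter.2 ⟨mem_noncrossingMatchings.2
      (isNoncrossingMatching_insert_partner hm ha hBC.1 hBC.2), mem_insert_self _ _⟩
  · intro A hA
    obtain ⟨hA, hamA⟩ := mem_filter.1 hA
    exact (mem_noncrossingMatchings.1 hA).insert_partner_filter_union hm hamA
  · rintro ⟨B, C⟩ hBC
    simp only [mem_coe, mem_product, mem_noncrossingMatchings] at hBC
    exact filter_insert_partner_union hBC.1 hBC.2

lemma card_noncrossingMatchings_insert (hm : ∀ x ∈ T, m < x) :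
    #(noncrossingMatchings (insert m T)) = ∑ a ∈ T,
      #(noncrossingMatchings {x ∈ T | x < a}) * #(noncrossingMatchings {x ∈ T | a < x}) := by
  have hfibers : noncrossingMatchings (insert m T) =
      T.biUnion fun a => {A ∈ noncrossingMatchings (insert m T) | (a, m) ∈ A} := by
    ext A
    simp only [mem_biUnion, mem_filter]
    refine ⟨fun hA => ?_, fun ⟨_, _, hA, _⟩ => hA⟩
    obtain ⟨a, ha, hamA⟩ := (mem_noncrossingMatchings.1 hA).exists_partner_of_forall_lt hm
    exact ⟨a, ha, hA, hamA⟩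
  rw [hfibers, card_biUnion, sum_congr rfl fun a ha => card_filter_partner_mem hm ha]
  intro a _ b _ hab
  refine disjoint_left.2 fun A hA hA' => hab ?_
  obtain ⟨hA, hamA⟩ := mem_filter.1 hA
  have := (mem_noncrossingMatchings.1 hA).eq_of_endpoint hamA (mem_filter.1 hA').2
    (.inr rfl) (.inr rfl)
  exact congrArg Prod.fst this

lemma card_noncrossingMatchings (n : ℕ) {S : Finset α} (hS : #S = 2 * n) :
    #(noncrossingMatchings S) = catalan n := by
  induction n using Nat.strong_induction_on generalizing S with | _ n ih =>
  rcases n with _ | n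
  · rw [card_eq_zero.1 hS, noncrossingMatchings_empty, card_singleton, catalan_zero]
  have hne : S.Nonempty := card_pos.1 (by omega)
  set T := S.erase (S.min' hne)
  have hm : ∀ x ∈ T, S.min' hne < x := fun x hx => S.min'_lt_of_mem_erase_min' hne hx
  have hT : #T = 2 * n + 1 := by rw [card_erase_of_mem (S.min'_mem hne), hS]; omega
  set G : ℕ → ℕ := fun j => if Even j then catalan (j / 2) * catalan (n - j / 2) else 0
  have hterm : ∀ a ∈ T, #(noncrossingMatchings {x ∈ T | x < a}) *
      #(noncrossingMatchings {x ∈ T | a < x}) = G #{x ∈ T | x < a} := by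
    intro a ha
    have hcard := card_filter_lt_add_card_filter_gt ha
    by_cases hev : Even #{x ∈ T | x < a}
    · obtain ⟨i, hi⟩ := hev
      rw [ih i (by omega) (by omega), ih (n - i) (by omega) (by omega)]
      simp [G, hi, ← two_mul]
    · rw [card_noncrossingMatchings_of_odd (Nat.not_even_iff_odd.1 hev), zero_mul]
      simp only [G, hev, if_false]
  rw [← insert_erase (S.min'_mem hne), card_noncrossingMatchings_insert hm, sum_congr rfl hterm,
    sum_card_filter_lt, hT, sum_range_two_mul_add_one_of_odd_eq_zero G (fun i => by simp [G])]
  simp only [G, even_two_mul, if_true, Nat.mul_div_cancel_left _ two_pos]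
  rw [catalan_succ, Fin.sum_univ_eq_sum_range (fun i => catalan i * catalan (n - i))]

end LinearOrder

lemma IsNoncrossingMatching.card_filter_snd_eq_zero {S : Finset ℕ} {A : Finset (ℕ × ℕ)}
    (h : IsNoncrossingMatching S A) (h0 : 0 ∈ S) : #{p ∈ A | p.2 = 0} = 1 := by
  obtain ⟨p, hp, h0p⟩ := h.mem_iff.1 h0
  have hp2 : p.2 = 0 := (h0p.resolve_left fun e => (h.snd_lt_fst p hp).not_ge (e ▸ Nat.zero_le _)).symm
  refine card_eq_one.2 ⟨p, eq_singleton_iff_unique_mem.2 ⟨mem_filter.2 ⟨hp, hp2⟩, fun q hq => ?_⟩⟩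
  obtain ⟨hq, hq2⟩ := mem_filter.1 hq
  exact h.eq_of_endpoint hq hp (.inr hq2.symm) (.inr hp2.symm)

lemma pairEndpoints_eq_bind_add_replicate (A : Finset (ℕ × ℕ)) :
    pairEndpoints A = (A.val.bind fun p => if p.2 = 0 then {p.1} else {p.1, p.2}) +
      Multiset.replicate #{p ∈ A | p.2 = 0} 0 := by
  have hsplit : ∀ p ∈ A.val, ({p.1, p.2} : Multiset ℕ) =
      (if p.2 = 0 then {p.1} else {p.1, p.2}) + if p.2 = 0 then {0} else 0 := by
    intro p _
    split_ifs with hp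
    · rw [hp, Multiset.insert_eq_cons, ← Multiset.singleton_add]
    · rw [add_zero]
  rw [pairEndpoints, Multiset.bind_congr hsplit, Multiset.bind_add, ← Multiset.bind_filter,
    Multiset.bind_singleton, Multiset.map_const', card_def, filter_val]

lemma isNoncrossingMatching_insert_zero_iff {l : List ℕ} (hl : l.Nodup) (hpos : ∀ x ∈ l, 0 < x)
    {A : Finset (ℕ × ℕ)} :
    IsNoncrossingMatching (insert 0 l.toFinset) A ↔
      (∀ p ∈ A, p.2 ≠ 0 → p.1 > p.2) ∧
      #{p ∈ A | p.2 = 0} = 1 ∧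
      (A.val.bind fun p => if p.2 = 0 then {p.1} else {p.1, p.2}) = (l : Multiset ℕ) ∧
      (∀ p ∈ A, ∀ q ∈ A, p.2 ≠ 0 → q.2 ≠ 0 → ¬(p.1 > q.1 ∧ q.1 ≥ p.2 ∧ p.2 > q.2)) ∧
      (∀ p ∈ A, ∀ q ∈ A, p.2 ≠ 0 → q.2 = 0 → ¬(p.1 ≥ q.1 ∧ q.1 ≥ p.2)) := by
  have h0 : 0 ∉ l := fun h => lt_irrefl 0 (hpos 0 h)
  have hS : (insert 0 l.toFinset).val = (l : Multiset ℕ) + {0} := by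
    rw [insert_val_of_notMem (mt List.mem_toFinset.1 h0), List.toFinset_val, hl.dedup,
      add_comm, Multiset.singleton_add]
  have hends := pairEndpoints_eq_bind_add_replicate A
  constructor
  · intro h
    rw [h.pairEndpoints_eq, hS] at hends
    have hone := h.card_filter_snd_eq_zero (mem_insert_self 0 _)
    rw [hone, Multiset.replicate_one] at hends
    refine ⟨fun p hp _ => h.snd_lt_fst p hp, hone, (add_right_cancel hends).symm,
      fun p hp q hq _ _ => h.not_crosses p hp q hq, fun p hp q hq hp2 hq2 ⟨h₁, h₂⟩ => ?_⟩
    have hne : p.1 ≠ q.1 := fun e => hp2 (hq2 ▸ congrArg Prod.snd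
      (h.eq_of_endpoint hp hq (.inl rfl) (.inl e)))
    exact h.not_crosses p hp q hq ⟨lt_of_le_of_ne h₁ hne.symm, h₂, by omega⟩
  · rintro ⟨hgt, hone, hbind, hnc₁, hnc₂⟩
    refine ⟨fun p hp => ?_, ?_, fun p hp q hq ⟨h₁, h₂, h₃⟩ => ?_⟩
    · by_cases hp2 : p.2 = 0
      · have hmem : p.1 ∈ A.val.bind fun p => if p.2 = 0 then {p.1} else {p.1, p.2} :=
          Multiset.mem_bind.2 ⟨p, hp, by simp [hp2]⟩
        rw [hbind] at hmem
        exact hp2 ▸ hpos _ hmem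
      · exact hgt p hp hp2
    · rw [hends, hone, hbind, Multiset.replicate_one, hS]
    · by_cases hq2 : q.2 = 0
      · by_cases hp2 : p.2 = 0
        · omega
        · exact hnc₂ p hp q hq hp2 hq2 ⟨h₁.le, h₂⟩
      · exact hnc₁ p hp q hq (by omega) hq2 ⟨h₁, h₂, h₃⟩

theorem nested_odd_collections_card_catalan_general (k : ℕ) (hk : 0 < k) (l : List ℕ)
    (hsort : l.Pairwise (· > ·)) (hpos : ∀ x ∈ l, 0 < x)
    (hlen : l.length = 2 * k - 1) :
    Nat.card {A : Finset (ℕ × ℕ) //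
      A.card = k ∧
      (∀ p ∈ A, p.2 ≠ 0 → p.1 > p.2) ∧
      (A.filter (fun p => p.2 = 0)).card = 1 ∧
      (A.val.bind fun p => if p.2 = 0 then {p.1} else {p.1, p.2}) = (l : Multiset ℕ) ∧
      (∀ p ∈ A, ∀ q ∈ A, p.2 ≠ 0 → q.2 ≠ 0 → ¬(p.1 > q.1 ∧ q.1 ≥ p.2 ∧ p.2 > q.2)) ∧
      (∀ p ∈ A, ∀ q ∈ A, p.2 ≠ 0 → q.2 = 0 → ¬(p.1 ≥ q.1 ∧ q.1 ≥ p.2))} = catalan k := by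
  have hl : l.Nodup := hsort.imp ne_of_gt
  have hcard : #(insert 0 l.toFinset) = 2 * k := by
    rw [card_insert_of_notMem (fun h => lt_irrefl 0 (hpos 0 (List.mem_toFinset.1 h))),
      List.toFinset_card_of_nodup hl, hlen]
    omega
  rw [← card_noncrossingMatchings k hcard, ← Nat.card_eq_finsetCard]
  refine Nat.card_congr (Equiv.subtypeEquivRight fun A => ?_)
  have hiff := isNoncrossingMatching_insert_zero_iff hl hpos (A := A)
  rw [mem_noncrossingMatchings]
  exact ⟨fun h => hiff.2 h.2, fun h => ⟨by have := h.card_eq; omega, hiff.1 h⟩⟩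

/-- If `λ` has `2k − 1` distinct parts, the nested collections consisting of one
singleton and `k − 1` pairs, using each part exactly once, are counted by the Catalan
number `C_k`.  A singleton `(c)` is encoded as the pair `(c, 0)`. -/
theorem nested_odd_collections_card_catalan (N k : ℕ) (hk : 0 < k) (l : List ℕ)
    (hsort : l.Pairwise (· > ·)) (hpos : ∀ x ∈ l, 0 < x)
    (hsum : l.sum = N) (hlen : l.length = 2 * k - 1) :
    Nat.card {A : Finset (ℕ × ℕ) //
      A.card = k ∧
      (∀ p ∈ A, p.2 ≠ 0 → p.1 > p.2) ∧
      (A.filter (fun p => p.2 = 0)).card = 1 ∧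
      (A.val.bind fun p => if p.2 = 0 then {p.1} else {p.1, p.2}) = (l : Multiset ℕ) ∧
      (∀ p ∈ A, ∀ q ∈ A, p.2 ≠ 0 → q.2 ≠ 0 → ¬(p.1 > q.1 ∧ q.1 ≥ p.2 ∧ p.2 > q.2)) ∧
      (∀ p ∈ A, ∀ q ∈ A, p.2 ≠ 0 → q.2 = 0 → ¬(p.1 ≥ q.1 ∧ q.1 ≥ p.2))} = catalan k :=
  nested_odd_collections_card_catalan_general k hk l hsort hpos hlen
end

section
/- Let V be a real inner product space with orthonormal family {s_μ} indexed by partitions μ of N (ordered by dominance). Suppose for each generator vector v_B (indexed by B with associated partition φ(B)) we have ⟨s_μ, v_B⟩ = 0 unless μ ⊵ φ(B), and ⟨s_{φ(B)}, v_B⟩ = 1, and all ⟨s_μ, v_B⟩ ≥ 0. Fix A with φ(A) = λ. If there exists f supported on partitions ⊵ λ with ⟨f, v_A⟩ > 0 and ⟨f, v_B⟩ ≤ 0 for all B ≠ A with φ(B) ⊵ λ, then there exists g with ⟨g, v_A⟩ > 0 and ⟨g, v_B⟩ ≤ 0 for all B ≠ A (with no restriction on φ(B)). -/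
open scoped RealInnerProductSpace

/-- Dominance order on partitions of `n`: `Dominates μ ν` means `μ ⊵ ν`. -/
def Dominates {n : ℕ} (μ ν : n.Partition) : Prop :=
  ∀ i : ℕ, ((ν.parts.sort (· ≥ ·)).take i).sum ≤ ((μ.parts.sort (· ≥ ·)).take i).sum

/-!
Subtract from `f` a large multiple `C • ∑ s μ` of the vectors `s μ` with `μ ⋭ φ A`. By
triangularity this leaves `⟪f, v A⟫` unchanged; by nonnegativity it can only decrease every
other `⟪f, v B⟫`; and when `φ B ⋭ φ A` the diagonal term alone lowers `⟪f, v B⟫` by `C`, which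
makes it nonpositive once `C ≥ ∑ B, |⟪f, v B⟫|`.
-/

section Separation

variable {V P ι : Type*} [NormedAddCommGroup V] [InnerProductSpace ℝ V]

lemma inner_sub_smul_sum_left (f w : V) (C : ℝ) (s : P → V) (T : Finset P) :
    ⟪f - C • ∑ μ ∈ T, s μ, w⟫ = ⟪f, w⟫ - C * ∑ μ ∈ T, ⟪s μ, w⟫ := by
  rw [inner_sub_left, real_inner_smul_left, sum_inner]

lemma exists_separating_of_separating_off [Fintype ι] (s : P → V) (v : ι → V) (φ : ι → P)
    (hdiag : ∀ B : ι, ⟪s (φ B), v B⟫ = 1) (hnonneg : ∀ (μ : P) (B : ι), 0 ≤ ⟪s μ, v B⟫)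
    (A : ι) (T : Finset P) (hTA : ∀ μ ∈ T, ⟪s μ, v A⟫ = 0) (f : V) (hfA : 0 < ⟪f, v A⟫)
    (hfB : ∀ B : ι, B ≠ A → φ B ∉ T → ⟪f, v B⟫ ≤ 0) :
    ∃ g : V, 0 < ⟪g, v A⟫ ∧ ∀ B : ι, B ≠ A → ⟪g, v B⟫ ≤ 0 := by
  set C : ℝ := ∑ B, |⟪f, v B⟫|
  have hC : 0 ≤ C := Finset.sum_nonneg fun B _ => abs_nonneg _
  have hfC (B : ι) : ⟪f, v B⟫ ≤ C :=
    (le_abs_self _).trans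
      (Finset.single_le_sum (f := fun B => |⟪f, v B⟫|) (fun B _ => abs_nonneg _)
        (Finset.mem_univ B))
  have hsum_nonneg (B : ι) : 0 ≤ ∑ μ ∈ T, ⟪s μ, v B⟫ :=
    Finset.sum_nonneg fun μ _ => hnonneg μ B
  refine ⟨f - C • ∑ μ ∈ T, s μ, ?_, fun B hB => ?_⟩
  · rwa [inner_sub_smul_sum_left, Finset.sum_eq_zero hTA, mul_zero, sub_zero]
  rw [inner_sub_smul_sum_left, sub_nonpos]
  by_cases hBT : φ B ∈ T
  · have hdiag_le : 1 ≤ ∑ μ ∈ T, ⟪s μ, v B⟫ :=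
      hdiag B ▸ Finset.single_le_sum (fun μ _ => hnonneg μ B) hBT
    calc ⟪f, v B⟫ ≤ C := hfC B
      _ = C * 1 := (mul_one C).symm
      _ ≤ C * ∑ μ ∈ T, ⟪s μ, v B⟫ := mul_le_mul_of_nonneg_left hdiag_le hC
  · exact (hfB B hB hBT).trans (mul_nonneg hC (hsum_nonneg B))

end Separation

theorem separation_from_above_general (N : ℕ) (V : Type*) [NormedAddCommGroup V]
    [InnerProductSpace ℝ V] (s : N.Partition → V)
    (ι : Type*) [Fintype ι] (v : ι → V) (φ : ι → N.Partition)
    (htri : ∀ (μ : N.Partition) (B : ι), ¬ Dominates μ (φ B) → ⟪s μ, v B⟫ = 0)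
    (hdiag : ∀ B : ι, ⟪s (φ B), v B⟫ = 1)
    (hnonneg : ∀ (μ : N.Partition) (B : ι), 0 ≤ ⟪s μ, v B⟫)
    (A : ι) (f : V)
    (hfA : 0 < ⟪f, v A⟫)
    (hfB : ∀ B : ι, B ≠ A → Dominates (φ B) (φ A) → ⟪f, v B⟫ ≤ 0) :
    ∃ g : V, 0 < ⟪g, v A⟫ ∧ ∀ B : ι, B ≠ A → ⟪g, v B⟫ ≤ 0 := by
  classical
  exact exists_separating_of_separating_off s v φ hdiag hnonneg A
    ({μ | ¬ Dominates μ (φ A)} : Finset _) (fun μ hμ => htri μ A (by simpa using hμ)) f hfA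
    fun B hB hBT => hfB B hB (by simpa using hBT)

/-- Lemma 3.6: in an inner product space with orthonormal Schur vectors `s μ`
(`μ ⊢ N`) and generators `v B` that are dominance-triangular with respect to
`φ B` with nonnegative coefficients, separation of `A` from above implies full
separation. -/
theorem separation_from_above (N : ℕ) (V : Type*) [NormedAddCommGroup V]
    [InnerProductSpace ℝ V] (s : N.Partition → V) (hs : Orthonormal ℝ s)
    (ι : Type*) [Fintype ι] (v : ι → V) (φ : ι → N.Partition)
    (htri : ∀ (μ : N.Partition) (B : ι), ¬ Dominates μ (φ B) → ⟪s μ, v B⟫ = 0)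
    (hdiag : ∀ B : ι, ⟪s (φ B), v B⟫ = 1)
    (hnonneg : ∀ (μ : N.Partition) (B : ι), 0 ≤ ⟪s μ, v B⟫)
    (A : ι) (f : V)
    (hsupp : ∃ a : N.Partition → ℝ,
      f = ∑ μ : N.Partition, a μ • s μ ∧ ∀ μ, a μ ≠ 0 → Dominates μ (φ A))
    (hfA : 0 < ⟪f, v A⟫)
    (hfB : ∀ B : ι, B ≠ A → Dominates (φ B) (φ A) → ⟪f, v B⟫ ≤ 0) :
    ∃ g : V, 0 < ⟪g, v A⟫ ∧ ∀ B : ι, B ≠ A → ⟪g, v B⟫ ≤ 0 :=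
  separation_from_above_general N V s ι v φ htri hdiag hnonneg A f hfA hfB
end

section
/- Suppose f separates Y on [λ, μ] with common positive value k on Y, and g partially separates (X, Y) on [λ, μ] with common positive value l on X, where X ⊆ Y ⊆ SSP_λ. Let m be the maximum of ⟨g, s_B⟩ over B ∈ SSP_λ \ Y (or 0 if this set is empty), and choose an integer b ≥ max(0, m/k). Then h = g + b·f − b·k·s_λ separates X on [λ, μ]: ⟨h, s_A⟩ = l > 0 for all A ∈ X, ⟨h, s_B⟩ ≤ 0 for all B ∈ SSP_λ \ X, and ⟨h, s_B⟩ ≤ 0 for all B ∈ SSP_ν with ν in [λ, μ], ν ≠ λ. -/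
/-!
Pair `h = g + b•f - (b k)•s_λ` with any `s_B`.  Dominance triangularity makes the `s_λ` term
contribute exactly `b k` on `SSP_λ` and nothing on the other `SSP_ν`.  On `Y` the terms `b•f` and
`-(b k)•s_λ` cancel, so `h` agrees with `g` there; off `Y` the choice of `b` lets `-(b k)` absorb
`⟪g, s_B⟫` while `b ⟪f, s_B⟫ ≤ 0`; below `λ` every term is nonpositive.  Integrality holds since
Schur-integral elements form the `ℤ`-span of the Schur basis.
-/

open scoped RealInnerProductSpace

open Finset

theorem exists_int_sum_smul_iff_mem_span {κ V : Type*} [Fintype κ] [AddCommGroup V]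
    [Module ℝ V] {s : κ → V} {x : V} :
    (∃ c : κ → ℤ, x = ∑ i, (c i : ℝ) • s i) ↔ x ∈ Submodule.span ℤ (Set.range s) := by
  simp_rw [Int.cast_smul_eq_zsmul, Submodule.mem_span_range_iff_exists_fun, eq_comm]

theorem real_inner_add_smul_sub_smul_left {V : Type*} [NormedAddCommGroup V]
    [InnerProductSpace ℝ V] (g f e w : V) (b k : ℝ) :
    ⟪g + b • f - (b * k) • e, w⟫ = ⟪g, w⟫ + b * (⟪f, w⟫ - k * ⟪e, w⟫) := by
  simp only [inner_sub_left, inner_add_left, real_inner_smul_left]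
  ring

theorem separation_step_general (N : ℕ) (V : Type*) [NormedAddCommGroup V]
    [InnerProductSpace ℝ V] (s : N.Partition → V)
    (ι : Type*) [DecidableEq ι] (SSP : N.Partition → Finset ι) (v : ι → V)
    (lam mu : N.Partition)
    -- dominance triangularity key facts
    (hs1 : ∀ B ∈ SSP lam, ⟪s lam, v B⟫ = 1)
    (hs2 : ∀ ν : N.Partition, ν ≠ lam → ∀ B ∈ SSP ν, ⟪s lam, v B⟫ = 0)
    (X Y : Finset ι) (hXY : X ⊆ Y) (hY : Y ⊆ SSP lam)
    (f g : V) (k l : ℤ)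
    -- f and g are Schur-integral
    (hfInt : ∃ c : N.Partition → ℤ, f = ∑ μ : N.Partition, (c μ : ℝ) • s μ)
    (hgInt : ∃ c : N.Partition → ℤ, g = ∑ μ : N.Partition, (c μ : ℝ) • s μ)
    -- f separates Y on [lam, mu]
    (hf1 : ∀ ν : N.Partition, ν ≠ lam → Dominates ν lam → Dominates mu ν →
      ∀ B ∈ SSP ν, ⟪f, v B⟫ ≤ 0)
    (hf2 : ∀ B ∈ SSP lam \ Y, ⟪f, v B⟫ ≤ 0)
    (hf3 : ∀ B ∈ Y, ⟪f, v B⟫ = (k : ℝ))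
    -- g partially separates (X, Y) on [lam, mu]
    (hg1 : ∀ ν : N.Partition, ν ≠ lam → Dominates ν lam → Dominates mu ν →
      ∀ B ∈ SSP ν, ⟪g, v B⟫ ≤ 0)
    (hg2 : ∀ B ∈ Y \ X, ⟪g, v B⟫ ≤ 0)
    (hg3 : ∀ B ∈ X, ⟪g, v B⟫ = (l : ℝ))
    -- b ≥ max(0, m/k) where m bounds ⟪g, s_B⟫ over B ∈ SSP_λ \ Y
    (b : ℤ) (hb0 : 0 ≤ b)
    (hbm : ∀ B ∈ SSP lam \ Y, ⟪g, v B⟫ ≤ (b : ℝ) * (k : ℝ)) :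
    (∃ c : N.Partition → ℤ,
        g + (b : ℝ) • f - ((b * k : ℤ) : ℝ) • s lam = ∑ μ : N.Partition, (c μ : ℝ) • s μ) ∧
    (∀ A ∈ X, ⟪g + (b : ℝ) • f - ((b * k : ℤ) : ℝ) • s lam, v A⟫ = (l : ℝ)) ∧
    (∀ B ∈ SSP lam \ X, ⟪g + (b : ℝ) • f - ((b * k : ℤ) : ℝ) • s lam, v B⟫ ≤ 0) ∧
    (∀ ν : N.Partition, ν ≠ lam → Dominates ν lam → Dominates mu ν →
      ∀ B ∈ SSP ν, ⟪g + (b : ℝ) • f - ((b * k : ℤ) : ℝ) • s lam, v B⟫ ≤ 0) := by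
  have hbR : (0 : ℝ) ≤ b := by exact_mod_cast hb0
  have inner_h : ∀ w, ⟪g + (b : ℝ) • f - ((b * k : ℤ) : ℝ) • s lam, w⟫ =
      ⟪g, w⟫ + b * (⟪f, w⟫ - k * ⟪s lam, w⟫) := fun w => by
    push_cast
    exact real_inner_add_smul_sub_smul_left g f (s lam) w b k
  refine ⟨?_, fun A hA => ?_, fun B hB => ?_, fun ν hν hνlam hmuν B hB => ?_⟩
  · simp only [exists_int_sum_smul_iff_mem_span] at hfInt hgInt ⊢
    rw [Int.cast_smul_eq_zsmul, Int.cast_smul_eq_zsmul]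
    exact sub_mem (add_mem hgInt (Submodule.smul_mem _ b hfInt))
      (Submodule.smul_mem _ _ (Submodule.subset_span ⟨lam, rfl⟩))
  · rw [inner_h, hg3 A hA, hf3 A (hXY hA), hs1 A (hY (hXY hA))]
    ring
  · obtain ⟨hB, hBX⟩ := mem_sdiff.1 hB
    rw [inner_h, hs1 B hB]
    by_cases hBY : B ∈ Y
    · rw [hf3 B hBY]
      linarith [hg2 B (mem_sdiff.2 ⟨hBY, hBX⟩)]
    · have hBY' : B ∈ SSP lam \ Y := mem_sdiff.2 ⟨hB, hBY⟩
      linarith [hbm B hBY', mul_nonpos_of_nonneg_of_nonpos hbR (hf2 B hBY')]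
  · rw [inner_h, hs2 ν hν B hB, mul_zero, sub_zero]
    linarith [hg1 ν hν hνlam hmuν B hB,
      mul_nonpos_of_nonneg_of_nonpos hbR (hf1 ν hν hνlam hmuν B hB)]

/-- Lemma 4.3: if `f` separates `Y` on `[λ, μ]` with common value `k > 0` on `Y`,
`g` partially separates `(X, Y)` on `[λ, μ]` with common value `l > 0` on `X`,
`b` is a nonnegative integer with `b·k` at least every `⟪g, s_B⟫` for
`B ∈ SSP_λ \ Y`, then `h = g + b·f − b·k·s_λ` separates `X` on `[λ, μ]`. -/
theorem separation_step (N : ℕ) (V : Type*) [NormedAddCommGroup V]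
    [InnerProductSpace ℝ V] (s : N.Partition → V)
    (ι : Type*) [DecidableEq ι] (SSP : N.Partition → Finset ι) (v : ι → V)
    (lam mu : N.Partition)
    -- dominance triangularity key facts
    (hs1 : ∀ B ∈ SSP lam, ⟪s lam, v B⟫ = 1)
    (hs2 : ∀ ν : N.Partition, ν ≠ lam → ∀ B ∈ SSP ν, ⟪s lam, v B⟫ = 0)
    (X Y : Finset ι) (hXY : X ⊆ Y) (hY : Y ⊆ SSP lam)
    (f g : V) (k l : ℤ) (hk : 0 < k) (hl : 0 < l)
    -- f and g are Schur-integral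
    (hfInt : ∃ c : N.Partition → ℤ, f = ∑ μ : N.Partition, (c μ : ℝ) • s μ)
    (hgInt : ∃ c : N.Partition → ℤ, g = ∑ μ : N.Partition, (c μ : ℝ) • s μ)
    -- f separates Y on [lam, mu]
    (hf1 : ∀ ν : N.Partition, ν ≠ lam → Dominates ν lam → Dominates mu ν →
      ∀ B ∈ SSP ν, ⟪f, v B⟫ ≤ 0)
    (hf2 : ∀ B ∈ SSP lam \ Y, ⟪f, v B⟫ ≤ 0)
    (hf3 : ∀ B ∈ Y, ⟪f, v B⟫ = (k : ℝ))
    -- g partially separates (X, Y) on [lam, mu]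
    (hg1 : ∀ ν : N.Partition, ν ≠ lam → Dominates ν lam → Dominates mu ν →
      ∀ B ∈ SSP ν, ⟪g, v B⟫ ≤ 0)
    (hg2 : ∀ B ∈ Y \ X, ⟪g, v B⟫ ≤ 0)
    (hg3 : ∀ B ∈ X, ⟪g, v B⟫ = (l : ℝ))
    -- b ≥ max(0, m/k) where m bounds ⟪g, s_B⟫ over B ∈ SSP_λ \ Y
    (b : ℤ) (hb0 : 0 ≤ b)
    (hbm : ∀ B ∈ SSP lam \ Y, ⟪g, v B⟫ ≤ (b : ℝ) * (k : ℝ)) :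
    (∃ c : N.Partition → ℤ,
        g + (b : ℝ) • f - ((b * k : ℤ) : ℝ) • s lam = ∑ μ : N.Partition, (c μ : ℝ) • s μ) ∧
    (∀ A ∈ X, ⟪g + (b : ℝ) • f - ((b * k : ℤ) : ℝ) • s lam, v A⟫ = (l : ℝ)) ∧
    (∀ B ∈ SSP lam \ X, ⟪g + (b : ℝ) • f - ((b * k : ℤ) : ℝ) • s lam, v B⟫ ≤ 0) ∧
    (∀ ν : N.Partition, ν ≠ lam → Dominates ν lam → Dominates mu ν →
      ∀ B ∈ SSP ν, ⟪g + (b : ℝ) • f - ((b * k : ℤ) : ℝ) • s lam, v B⟫ ≤ 0) :=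
  separation_step_general N V s ι SSP v lam mu hs1 hs2 X Y hXY hY f g k l hfInt hgInt hf1 hf2 hf3
    hg1 hg2 hg3 b hb0 hbm
end

section
/- Let λ = (λ1 > λ2 > ... > λm > 0) be a partition with distinct parts, let ρ = (λi, λj) with i < j, and let λ[ρ] be λ with λi replaced by λi + 1 and λj replaced by λj − 1. The number of semistandard tableaux of shape λ[ρ] and content λ is 2^{j−i−1}. -/
open Finset

namespace SSYT

/-- next special row after `r`: least element of `S` above `r`, or `J`. -/
noncomputable def nxt (J : ℕ) (S : Finset ℕ) (r : ℕ) : ℕ := sInf ({x | x ∈ S ∧ r < x} ∪ {J})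

/-- the model tableau attached to a subset `S ⊆ (I,J)`. -/
noncomputable def tab (I J : ℕ) (rl : ℕ → ℕ) (S : Finset ℕ) (r c : ℕ) : ℕ :=
  if c < rl r then (if (r = I ∨ r ∈ S) ∧ c = rl r - 1 then nxt J S r + 1 else r + 1) else 0

variable {I J : ℕ}

lemma nxt_lt {S : Finset ℕ} {r : ℕ} (h : r < J) : r < nxt J S r := by
  have hmem : nxt J S r ∈ ({x | x ∈ S ∧ r < x} ∪ {J} : Set ℕ) :=
    Nat.sInf_mem ⟨J, Or.inr rfl⟩
  rcases hmem with ⟨_, h2⟩ | h2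
  · exact h2
  · simp only [Set.mem_singleton_iff] at h2; omega

lemma nxt_le (S : Finset ℕ) (r : ℕ) : nxt J S r ≤ J :=
  Nat.sInf_le (Or.inr rfl)

lemma nxt_mem (S : Finset ℕ) (r : ℕ) : nxt J S r ∈ S ∨ nxt J S r = J := by
  have hmem : nxt J S r ∈ ({x | x ∈ S ∧ r < x} ∪ {J} : Set ℕ) :=
    Nat.sInf_mem ⟨J, Or.inr rfl⟩
  rcases hmem with ⟨h1, _⟩ | h2
  · exact Or.inl h1
  · exact Or.inr h2

lemma nxt_le_of_mem {S : Finset ℕ} {r x : ℕ} (hx : x ∈ S) (hrx : r < x) :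
    nxt J S r ≤ x := Nat.sInf_le (Or.inl ⟨hx, hrx⟩)

/-- `nxt S P = V` when `V ∈ S ∪ {J}`, `P < V`, and no element of `S` lies in `(P, V)`. -/
lemma nxt_eq {S : Finset ℕ} {P V : ℕ} (hV : V ∈ S ∨ V = J) (hPV : P < V) (hVJ : V ≤ J)
    (hgap : ∀ x ∈ S, P < x → V ≤ x) : nxt J S P = V := by
  refine le_antisymm ?_ ?_
  · rcases hV with h | h
    · exact nxt_le_of_mem h hPV
    · subst h; exact nxt_le S P
  · have hmem : nxt J S P ∈ ({x | x ∈ S ∧ P < x} ∪ {J} : Set ℕ) :=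
      Nat.sInf_mem ⟨J, Or.inr rfl⟩
    rcases hmem with ⟨h1, h2⟩ | h2
    · exact hgap _ h1 h2
    · simp only [Set.mem_singleton_iff] at h2; omega

variable {I J m : ℕ} {rl : ℕ → ℕ} {S : Finset ℕ}

section Forward

variable (hIJ : I < J) (hJm : J < m)
  (hN1 : ∀ r, m ≤ r → rl r = 0)
  (hN2 : ∀ r, rl (r+1) ≤ rl r)
  (hN3 : ∀ r, I ≤ r → r < J → rl (r+1) < rl r)
  (hN5 : ∀ r, r < m → r ≠ J → 0 < rl r)
  (hS : S ⊆ Finset.Ioo I J)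

include hS hIJ in
lemma spec_bounds {r : ℕ} (h : r = I ∨ r ∈ S) : I ≤ r ∧ r < J := by
  rcases h with h | h
  · omega
  · have := hS h; simp only [mem_Ioo] at this; omega

include hIJ hS in
lemma tab_good1 (hJm : J < m) (hN1 : ∀ r, m ≤ r → rl r = 0) (r c : ℕ) (hc : c < rl r) :
    1 ≤ tab I J rl S r c ∧ tab I J rl S r c ≤ m := by
  have hrm : r < m := by by_contra h; have := hN1 r (by omega); omega
  unfold tab
  rw [if_pos hc]
  split_ifs with h
  · have hb := spec_bounds hIJ hS h.1
    have h1 := nxt_le (J := J) S r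
    omega
  · omega

lemma tab_good2 (r c : ℕ) (hc : ¬ c < rl r) : tab I J rl S r c = 0 := by
  unfold tab; rw [if_neg hc]

include hIJ hS in
lemma tab_good3 (r c : ℕ) (hc : c + 1 < rl r) : tab I J rl S r c ≤ tab I J rl S r (c+1) := by
  unfold tab
  rw [if_pos (by omega), if_pos hc]
  rw [if_neg (by rintro ⟨-, h⟩; omega)]
  split_ifs with h
  · have hb := spec_bounds hIJ hS h.1
    have := nxt_lt (S := S) (r := r) hb.2
    omega
  · omega

include hIJ hS hN2 hN3 in
lemma tab_good4 (r c : ℕ) (hc : c < rl (r+1)) : tab I J rl S r c < tab I J rl S (r+1) c := by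
  have hcr : c < rl r := lt_of_lt_of_le hc (hN2 r)
  have hup : r + 2 ≤ tab I J rl S (r+1) c := by
    unfold tab; rw [if_pos hc]
    split_ifs with h
    · have hb := spec_bounds hIJ hS h.1
      have := nxt_lt (S := S) (r := r+1) hb.2
      omega
    · omega
  have hdown : tab I J rl S r c = r + 1 := by
    have hneg : ¬((r = I ∨ r ∈ S) ∧ c = rl r - 1) := by
      rintro ⟨hsp, hlast⟩
      have hb := spec_bounds hIJ hS hsp
      have := hN3 r hb.1 hb.2
      omega
    unfold tab; rw [if_pos hcr, if_neg hneg]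
  omega


include hIJ hS hN5 in
lemma tab_cnt (V r : ℕ) (hrm : r < m) :
    ((range (rl r)).filter (fun c => tab I J rl S r c = V + 1)).card
      = (if V = r then rl r - (if r = I ∨ r ∈ S then 1 else 0) else 0)
        + (if (r = I ∨ r ∈ S) ∧ nxt J S r = V then 1 else 0) := by
  by_cases hsp : r = I ∨ r ∈ S
  · have hb := spec_bounds hIJ hS hsp
    have hr1 : 1 ≤ rl r := hN5 r hrm (by omega)
    have hn := nxt_lt (S := S) (r := r) hb.2
    have hlast : tab I J rl S r (rl r - 1) = nxt J S r + 1 := by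
      unfold tab; rw [if_pos (by omega), if_pos ⟨hsp, rfl⟩]
    have hord : ∀ c, c < rl r - 1 → tab I J rl S r c = r + 1 := by
      intro c hc
      unfold tab; rw [if_pos (by omega), if_neg (by rintro ⟨-, h⟩; omega)]
    have hsplit : range (rl r) = insert (rl r - 1) (range (rl r - 1)) := by
      rw [← Finset.range_add_one]; congr 1; omega
    have hinner : ((range (rl r - 1)).filter (fun c => tab I J rl S r c = V + 1)).card
        = if V = r then rl r - 1 else 0 := by
      have he : ((range (rl r - 1)).filter (fun c => tab I J rl S r c = V + 1))
          = if V = r then range (rl r - 1) else ∅ := by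
        split_ifs with hV
        · subst hV
          refine Finset.filter_true_of_mem ?_
          intro c hc; rw [hord c (mem_range.mp hc)]
        · refine Finset.filter_false_of_mem ?_
          intro c hc; rw [hord c (mem_range.mp hc)]; omega
      rw [he]; split_ifs <;> simp
    rw [hsplit, Finset.filter_insert, hlast]
    by_cases hnV : nxt J S r = V
    · rw [if_pos (by omega)]
      have hVr : ¬ V = r := by omega
      rw [Finset.card_insert_of_notMem
        (fun hmem => by have := mem_range.mp (Finset.mem_of_mem_filter _ hmem); omega), hinner]
      simp [hVr, hsp, hnV]
    · rw [if_neg (by omega), hinner]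
      simp only [hsp, hnV, and_false, if_false, add_zero]
      split_ifs with hV
      · simp [hsp]
      · rfl
  · have hord : ∀ c, c < rl r → tab I J rl S r c = r + 1 := by
      intro c hc
      unfold tab; rw [if_pos hc, if_neg (by rintro ⟨h, -⟩; exact hsp h)]
    have he : ((range (rl r)).filter (fun c => tab I J rl S r c = V + 1))
        = if V = r then range (rl r) else ∅ := by
      split_ifs with hV
      · subst hV
        refine Finset.filter_true_of_mem ?_
        intro c hc; rw [hord c (mem_range.mp hc)]
      · refine Finset.filter_false_of_mem ?_
        intro c hc; rw [hord c (mem_range.mp hc)]; omega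
    rw [he]
    simp only [hsp, false_and, if_false, add_zero]
    split_ifs <;> simp

include hIJ hJm hS in
lemma prev_unique (V : ℕ) (hV : V ∈ S ∨ V = J) :
    ((range m).filter (fun r => (r = I ∨ r ∈ S) ∧ nxt J S r = V)).card = 1 := by
  have hIV : I < V := by
    rcases hV with h | h
    · have := hS h; simp only [mem_Ioo] at this; omega
    · omega
  have hVJ : V ≤ J := by
    rcases hV with h | h
    · have := hS h; simp only [mem_Ioo] at this; omega
    · omega
  classical
  have hne : ((insert I S).filter (· < V)).Nonempty := ⟨I, by simp [hIV]⟩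
  obtain ⟨P, hPmem, hPmax⟩ : ∃ P, P ∈ (insert I S).filter (· < V) ∧
      ∀ x ∈ (insert I S).filter (· < V), x ≤ P :=
    ⟨_, Finset.max'_mem _ hne, fun x hx => Finset.le_max' _ x hx⟩
  rw [mem_filter, mem_insert] at hPmem
  have hPspec : P = I ∨ P ∈ S := hPmem.1
  have hPV : P < V := hPmem.2
  have hmax : ∀ x, (x = I ∨ x ∈ S) → x < V → x ≤ P := by
    intro x hx hxV
    exact hPmax x (by rw [mem_filter, mem_insert]; exact ⟨hx, hxV⟩)
  have hnxtP : nxt J S P = V := by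
    refine nxt_eq hV hPV hVJ ?_
    intro x hx hPx
    by_contra hc
    have := hmax x (Or.inr hx) (by omega)
    omega
  rw [Finset.card_eq_one]
  refine ⟨P, ?_⟩
  ext r
  simp only [mem_filter, mem_range, mem_singleton]
  constructor
  · rintro ⟨hrm, hsp, hnxt⟩
    have hbr := spec_bounds hIJ hS hsp
    have hrV : r < V := by
      have := nxt_lt (S := S) (r := r) hbr.2
      omega
    have hrP : r ≤ P := hmax r hsp hrV
    rcases Nat.lt_or_ge r P with hlt | hge
    · exfalso
      rcases hPspec with hPI | hPS
      · omega
      · have := nxt_le_of_mem (J := J) hPS hlt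
        omega
    · omega
  · rintro rfl
    have hbP := spec_bounds hIJ hS hPspec
    exact ⟨by omega, hPspec, hnxtP⟩

include hIJ hJm hS hN5 in
lemma tab_good5 (content : ℕ → ℕ) (hcI : content I + 1 = rl I) (hcJ : content J = rl J + 1)
    (hcO : ∀ V, V < m → V ≠ I → V ≠ J → content V = rl V) (V : ℕ) (hVm : V < m) :
    ∑ r ∈ range m, ((range (rl r)).filter fun c => tab I J rl S r c = V+1).card = content V := by
  classical
  rw [Finset.sum_congr rfl (fun r hr => tab_cnt hIJ hN5 hS V r (mem_range.mp hr))]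
  rw [Finset.sum_add_distrib]
  have h1 : ∑ r ∈ range m, (if V = r then rl r - (if r = I ∨ r ∈ S then 1 else 0) else 0)
      = rl V - (if V = I ∨ V ∈ S then 1 else 0) := by
    rw [Finset.sum_ite_eq (range m) V (fun r => rl r - (if r = I ∨ r ∈ S then 1 else 0))]
    simp [hVm]
  have h2 : (∑ r ∈ range m, if (r = I ∨ r ∈ S) ∧ nxt J S r = V then 1 else 0)
      = ((range m).filter (fun r => (r = I ∨ r ∈ S) ∧ nxt J S r = V)).card := by
    exact_mod_cast Finset.sum_boole _ _
  rw [h1, h2]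
  have hJI : ¬ (J = I ∨ J ∈ S) := by
    rintro (h | h)
    · omega
    · have := hS h; simp only [mem_Ioo] at this; omega
  by_cases hVJ2 : V = J
  · subst hVJ2
    rw [prev_unique hIJ hJm hS V (Or.inr rfl)]
    simp only [hJI, if_neg, if_false]
    omega
  by_cases hVS : V ∈ S
  · have hbV := hS hVS
    simp only [mem_Ioo] at hbV
    rw [prev_unique hIJ hJm hS V (Or.inl hVS)]
    have h3 : 1 ≤ rl V := hN5 V hVm hVJ2
    rw [hcO V hVm (by omega) hVJ2]
    simp only [hVS, or_true, if_pos]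
    omega
  by_cases hVI : V = I
  · have hempty : ((range m).filter (fun r => (r = I ∨ r ∈ S) ∧ nxt J S r = V)).card = 0 := by
      rw [Finset.card_eq_zero, Finset.filter_eq_empty_iff]
      rintro r hr ⟨hsp, hnxt⟩
      have hbr := spec_bounds hIJ hS hsp
      have := nxt_lt (S := S) (r := r) hbr.2
      omega
    rw [hempty, hVI]
    simp only [true_or, if_pos]
    omega
  · have hempty : ((range m).filter (fun r => (r = I ∨ r ∈ S) ∧ nxt J S r = V)).card = 0 := by
      rw [Finset.card_eq_zero, Finset.filter_eq_empty_iff]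
      rintro r hr ⟨hsp, hnxt⟩
      rcases nxt_mem (J := J) S r with h | h
      · rw [hnxt] at h; exact hVS h
      · omega
    rw [hempty]
    have hVsp : ¬ (V = I ∨ V ∈ S) := by rintro (h | h); exact hVI h; exact hVS h
    rw [hcO V hVm hVI hVJ2]
    simp [hVsp]


include hIJ hJm hN5 hS in
lemma tab_mem (x : ℕ) (hx1 : I < x) (hx2 : x < J) :
    x ∈ S ↔ ¬ tab I J rl S x (rl x - 1) = x + 1 := by
  have hxm : x < m := by omega
  have hrl1 : 1 ≤ rl x := hN5 x hxm (by omega)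
  constructor
  · intro hmem
    have hv : tab I J rl S x (rl x - 1) = nxt J S x + 1 := by
      unfold tab; rw [if_pos (by omega), if_pos ⟨Or.inr hmem, rfl⟩]
    rw [hv]
    have := nxt_lt (S := S) (r := x) hx2
    omega
  · intro hne
    by_contra hmem
    have hnsp : ¬ (x = I ∨ x ∈ S) := by
      rintro (h | h)
      · omega
      · exact hmem h
    have hv : tab I J rl S x (rl x - 1) = x + 1 := by
      unfold tab; rw [if_pos (by omega), if_neg (by rintro ⟨h, -⟩; exact hnsp h)]
    exact hne hv

end Forward

section Converse

variable {T : ℕ → ℕ → ℕ} {content : ℕ → ℕ}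
variable (hIJ : I < J) (hJm : J < m)
  (hN1 : ∀ r, m ≤ r → rl r = 0)
  (hN2 : ∀ r, rl (r+1) ≤ rl r)
  (hN5 : ∀ r, r < m → r ≠ J → 0 < rl r)
  (hcI : content I + 1 = rl I) (hcJ : content J = rl J + 1)
  (hcO : ∀ V, V < m → V ≠ I → V ≠ J → content V = rl V)
  (g1 : ∀ r c, c < rl r → 1 ≤ T r c ∧ T r c ≤ m)
  (g3 : ∀ r c, c + 1 < rl r → T r c ≤ T r (c+1))
  (g4 : ∀ r c, c < rl (r+1) → T r c < T (r+1) c)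
  (g5 : ∀ V, V < m → ∑ r ∈ range m, ((range (rl r)).filter fun c => T r c = V+1).card = content V)

include hN2 g1 g4 in
lemma rowge : ∀ r c, c < rl r → r + 1 ≤ T r c := by
  intro r
  induction r with
  | zero => intro c hc; exact (g1 0 c hc).1
  | succ n ih =>
    intro c hc
    have hcr : c < rl n := lt_of_lt_of_le hc (hN2 n)
    have h1 := g4 n c hc
    have h2 := ih c hcr
    omega

include hIJ hJm hN2 hcO g1 g4 g5 in
lemma rowabove : ∀ r, r < I → ∀ c, c < rl r → T r c = r + 1 := by
  intro r
  induction r using Nat.strong_induction_on with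
  | _ r ih =>
    intro hrI c hc
    have hrm : r < m := by omega
    have hcV : content r = rl r := hcO r hrm (by omega) (by omega)
    have hsum := g5 r hrm
    rw [← Finset.add_sum_erase _ _ (mem_range.mpr hrm)] at hsum
    have hzero : ∀ x ∈ (range m).erase r,
        ((range (rl x)).filter fun c' => T x c' = r + 1).card = 0 := by
      intro x hx
      rw [Finset.mem_erase, mem_range] at hx
      rw [Finset.card_eq_zero, Finset.filter_eq_empty_iff]
      intro c' hc'
      rw [mem_range] at hc'
      rcases Nat.lt_or_ge x r with hlt | hge
      · rw [ih x hlt (by omega) c' hc']; omega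
      · have := rowge hN2 g1 g4 x c' hc'
        omega
    rw [Finset.sum_eq_zero hzero] at hsum
    have hfull : (range (rl r)).filter (fun c' => T r c' = r + 1) = range (rl r) := by
      refine Finset.eq_of_subset_of_card_le (Finset.filter_subset _ _) ?_
      rw [Finset.card_range]; omega
    have : c ∈ (range (rl r)).filter (fun c' => T r c' = r + 1) := by
      rw [hfull]; exact mem_range.mpr hc
    exact (mem_filter.mp this).2

include hIJ hJm hN1 hN2 hcO g1 g4 g5 in
lemma rowbelow : ∀ r, J < r → ∀ c, c < rl r → T r c = r + 1 := by
  suffices h : ∀ d r, J < r → m - r ≤ d → ∀ c, c < rl r → T r c = r + 1 by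
    intro r hr; exact h m r hr (by omega)
  intro d
  induction d with
  | zero =>
    intro r hJr hmr c hc
    have := hN1 r (by omega)
    omega
  | succ d ih =>
    intro r hJr hmr c hc
    have hrm : r < m := by
      by_contra h
      have := hN1 r (by omega)
      omega
    have hge := rowge hN2 g1 g4 r c hc
    have hle := (g1 r c hc).2
    by_contra hne
    have hVr : r < T r c - 1 := by omega
    have hVm : T r c - 1 < m := by omega
    have hrowV : ∀ c', c' < rl (T r c - 1) → T (T r c - 1) c' = (T r c - 1) + 1 :=
      fun c' hc' => ih (T r c - 1) (by omega) (by omega) c' hc'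
    have hcV : content (T r c - 1) = rl (T r c - 1) := hcO _ hVm (by omega) (by omega)
    have hsum := g5 (T r c - 1) hVm
    rw [← Finset.add_sum_erase _ _ (mem_range.mpr hVm)] at hsum
    have h1 : (range (rl (T r c - 1))).filter (fun c' => T (T r c - 1) c' = (T r c - 1) + 1)
        = range (rl (T r c - 1)) :=
      Finset.filter_true_of_mem (fun c' hc' => hrowV c' (mem_range.mp hc'))
    rw [h1, Finset.card_range] at hsum
    have h2 : 1 ≤ ((range (rl r)).filter fun c' => T r c' = (T r c - 1) + 1).card :=
      Finset.card_pos.mpr ⟨c, mem_filter.mpr ⟨mem_range.mpr hc, by omega⟩⟩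
    have h3 : ((range (rl r)).filter fun c' => T r c' = (T r c - 1) + 1).card
        ≤ ∑ x ∈ (range m).erase (T r c - 1),
            ((range (rl x)).filter fun c' => T x c' = (T r c - 1) + 1).card :=
      Finset.single_le_sum
        (f := fun x => ((range (rl x)).filter fun c' => T x c' = (T r c - 1) + 1).card)
        (fun _ _ => Nat.zero_le _)
        ((Finset.mem_erase.mpr ⟨by omega, mem_range.mpr hrm⟩ : r ∈ (range m).erase (T r c - 1)))
    omega

include hIJ hJm hN1 hN2 hcO g1 g4 g5 in
lemma no_big (r : ℕ) (hrm : r < m) (hrJ : r ≤ J) (c : ℕ) (hc : c < rl r)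
    (hbig : J + 1 < T r c) : False := by
  have hle := (g1 r c hc).2
  have hVm : T r c - 1 < m := by omega
  have hrowV : ∀ c', c' < rl (T r c - 1) → T (T r c - 1) c' = (T r c - 1) + 1 :=
    fun c' hc' => rowbelow hIJ hJm hN1 hN2 hcO g1 g4 g5 (T r c - 1) (by omega) c' hc'
  have hcV : content (T r c - 1) = rl (T r c - 1) := hcO _ hVm (by omega) (by omega)
  have hsum := g5 (T r c - 1) hVm
  rw [← Finset.add_sum_erase _ _ (mem_range.mpr hVm)] at hsum
  have h1 : (range (rl (T r c - 1))).filter (fun c' => T (T r c - 1) c' = (T r c - 1) + 1)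
      = range (rl (T r c - 1)) :=
    Finset.filter_true_of_mem (fun c' hc' => hrowV c' (mem_range.mp hc'))
  rw [h1, Finset.card_range] at hsum
  have h2 : 1 ≤ ((range (rl r)).filter fun c' => T r c' = (T r c - 1) + 1).card :=
    Finset.card_pos.mpr ⟨c, mem_filter.mpr ⟨mem_range.mpr hc, by omega⟩⟩
  have h3 : ((range (rl r)).filter fun c' => T r c' = (T r c - 1) + 1).card
      ≤ ∑ x ∈ (range m).erase (T r c - 1),
          ((range (rl x)).filter fun c' => T x c' = (T r c - 1) + 1).card :=
    Finset.single_le_sum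
      (f := fun x => ((range (rl x)).filter fun c' => T x c' = (T r c - 1) + 1).card)
      (fun _ _ => Nat.zero_le _)
      ((Finset.mem_erase.mpr ⟨by omega, mem_range.mpr hrm⟩ : r ∈ (range m).erase (T r c - 1)))
  omega

include hIJ hJm hN1 hN2 hcO g1 g4 g5 in
lemma rowJ : ∀ c, c < rl J → T J c = J + 1 := by
  intro c hc
  have hge := rowge hN2 g1 g4 J c hc
  by_contra hne
  exact no_big hIJ hJm hN1 hN2 hcO g1 g4 g5 J hJm le_rfl c hc (by omega)

include hIJ hJm hN2 hcI hcO g1 g4 g5 in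
lemma level (r : ℕ) (hIr : I ≤ r) (hrJ : r < J) :
    ∃ p c, (I ≤ p ∧ p ≤ r ∧ c < rl p ∧ r + 1 < T p c) ∧
      ∀ p' c', I ≤ p' → p' ≤ r → c' < rl p' → r + 1 < T p' c' → p' = p ∧ c' = c := by
  classical
  have hcompl : ∀ r' ∈ Icc I r, ((range (rl r')).filter fun c => ¬ r + 1 < T r' c).card
      = ∑ V ∈ Icc I r, ((range (rl r')).filter fun c => T r' c = V + 1).card := by
    intro r' hr'
    rw [mem_Icc] at hr'
    rw [← Finset.card_biUnion ?_]
    · congr 1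
      ext c
      simp only [mem_biUnion, mem_filter, mem_range, mem_Icc]
      constructor
      · rintro ⟨hc, hle⟩
        have h1 := rowge hN2 g1 g4 r' c hc
        exact ⟨T r' c - 1, ⟨by omega, by omega⟩, hc, by omega⟩
      · rintro ⟨V, ⟨hIV, hVr⟩, hc, hTc⟩
        exact ⟨hc, by omega⟩
    · intro x hx y hy hxy
      simp only [Finset.disjoint_left, mem_filter]
      rintro a ⟨-, h1⟩ ⟨-, h2⟩
      omega
  have hcol : ∀ V ∈ Icc I r,
      ∑ r' ∈ Icc I r, ((range (rl r')).filter fun c => T r' c = V + 1).card = content V := by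
    intro V hV
    rw [mem_Icc] at hV
    have hVm : V < m := by omega
    rw [← g5 V hVm]
    refine Finset.sum_subset ?_ ?_
    · intro x hx; rw [mem_Icc] at hx; rw [mem_range]; omega
    · intro x hx hxn
      rw [mem_range] at hx
      rw [mem_Icc] at hxn
      rw [Finset.card_eq_zero, Finset.filter_eq_empty_iff]
      intro c' hc'
      rw [mem_range] at hc'
      rcases Nat.lt_or_ge x I with hlt | hge
      · rw [rowabove hIJ hJm hN2 hcO g1 g4 g5 x hlt c' hc']; omega
      · have := rowge hN2 g1 g4 x c' hc'
        omega
  have hsum1 : ∑ r' ∈ Icc I r, rl r' = (∑ V ∈ Icc I r, content V) + 1 := by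
    have hpt : ∀ r' ∈ Icc I r, rl r' = content r' + (if r' = I then 1 else 0) := by
      intro r' hr'
      rw [mem_Icc] at hr'
      by_cases h : r' = I
      · rw [h]; simp; omega
      · rw [hcO r' (by omega) h (by omega)]; simp [h]
    rw [Finset.sum_congr rfl hpt, Finset.sum_add_distrib]
    have hI : (∑ r' ∈ Icc I r, if r' = I then 1 else 0) = 1 := by
      rw [Finset.sum_ite_eq' (Icc I r) I (fun _ => 1)]
      simp [hIr]
    rw [hI]
  have hsplit : ∀ r' ∈ Icc I r,
      ((range (rl r')).filter fun c => r + 1 < T r' c).card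
        + ((range (rl r')).filter fun c => ¬ r + 1 < T r' c).card = rl r' := by
    intro r' _
    rw [Finset.card_filter_add_card_filter_not, Finset.card_range]
  have hgsum : ∑ r' ∈ Icc I r, ((range (rl r')).filter fun c => r + 1 < T r' c).card = 1 := by
    have e1 : ∑ r' ∈ Icc I r, rl r'
        = ∑ r' ∈ Icc I r, (((range (rl r')).filter fun c => r + 1 < T r' c).card
          + ((range (rl r')).filter fun c => ¬ r + 1 < T r' c).card) :=
      (Finset.sum_congr rfl hsplit).symm
    rw [Finset.sum_add_distrib] at e1
    have e2 : ∑ r' ∈ Icc I r, ((range (rl r')).filter fun c => ¬ r + 1 < T r' c).card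
        = ∑ V ∈ Icc I r, content V := by
      rw [Finset.sum_congr rfl hcompl, Finset.sum_comm]
      exact Finset.sum_congr rfl hcol
    rw [e2] at e1
    omega
  have hex : ∃ p ∈ Icc I r, ((range (rl p)).filter fun c => r + 1 < T p c).card ≠ 0 := by
    by_contra hno
    push_neg at hno
    rw [Finset.sum_eq_zero hno] at hgsum
    omega
  obtain ⟨p, hpmem, hpne⟩ := hex
  have hp1 : ((range (rl p)).filter fun c => r + 1 < T p c).card = 1 := by
    have hle : ((range (rl p)).filter fun c => r + 1 < T p c).card
        ≤ ∑ r' ∈ Icc I r, ((range (rl r')).filter fun c => r + 1 < T r' c).card :=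
      Finset.single_le_sum (f := fun r' => ((range (rl r')).filter fun c => r + 1 < T r' c).card)
        (fun _ _ => Nat.zero_le _) hpmem
    omega
  have hothers : ∀ q ∈ Icc I r, q ≠ p →
      ((range (rl q)).filter fun c => r + 1 < T q c).card = 0 := by
    intro q hq hqp
    have he : ((range (rl p)).filter fun c => r + 1 < T p c).card
        + ∑ r' ∈ (Icc I r).erase p, ((range (rl r')).filter fun c => r + 1 < T r' c).card
        = ∑ r' ∈ Icc I r, ((range (rl r')).filter fun c => r + 1 < T r' c).card :=
      Finset.add_sum_erase (Icc I r)
        (fun r' => ((range (rl r')).filter fun c => r + 1 < T r' c).card) hpmem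
    have hqe : q ∈ (Icc I r).erase p := Finset.mem_erase.mpr ⟨hqp, hq⟩
    have hle : ((range (rl q)).filter fun c => r + 1 < T q c).card
        ≤ ∑ r' ∈ (Icc I r).erase p, ((range (rl r')).filter fun c => r + 1 < T r' c).card :=
      Finset.single_le_sum (f := fun r' => ((range (rl r')).filter fun c => r + 1 < T r' c).card)
        (fun _ _ => Nat.zero_le _) hqe
    omega
  obtain ⟨c, hc⟩ := Finset.card_eq_one.mp hp1
  rw [mem_Icc] at hpmem
  have hcmem : c ∈ (range (rl p)).filter (fun c => r + 1 < T p c) := by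
    rw [hc]; exact Finset.mem_singleton_self c
  rw [mem_filter, mem_range] at hcmem
  refine ⟨p, c, ⟨hpmem.1, hpmem.2, hcmem.1, hcmem.2⟩, ?_⟩
  intro p' c' hIp' hp'r hc' hT'
  have hp'p : p' = p := by
    by_contra hne
    have h0 := hothers p' (mem_Icc.mpr ⟨hIp', hp'r⟩) hne
    rw [Finset.card_eq_zero, Finset.filter_eq_empty_iff] at h0
    exact h0 (mem_range.mpr hc') hT'
  subst hp'p
  have hcc : c' ∈ (range (rl p')).filter (fun c => r + 1 < T p' c) :=
    mem_filter.mpr ⟨mem_range.mpr hc', hT'⟩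
  rw [hc, Finset.mem_singleton] at hcc
  exact ⟨rfl, hcc⟩

include hIJ hJm hN1 hN2 hN5 hcI hcO g1 g3 g4 g5 in
lemma converse (g2 : ∀ r c, ¬ c < rl r → T r c = 0) :
    ∀ r c, tab I J rl ((Finset.Ioo I J).filter (fun x => ¬ T x (rl x - 1) = x + 1)) r c = T r c := by
  classical
  set S := (Finset.Ioo I J).filter (fun x => ¬ T x (rl x - 1) = x + 1) with hSdef
  have hSmem : ∀ x, x ∈ S ↔ (I < x ∧ x < J ∧ ¬ T x (rl x - 1) = x + 1) := by
    intro x; rw [hSdef, mem_filter, mem_Ioo]; tauto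
  have hlev : ∀ lvl : ℕ, ∃ pc : ℕ × ℕ, I ≤ lvl → lvl < J →
      ((I ≤ pc.1 ∧ pc.1 ≤ lvl ∧ pc.2 < rl pc.1 ∧ lvl + 1 < T pc.1 pc.2) ∧
        ∀ p' c', I ≤ p' → p' ≤ lvl → c' < rl p' → lvl + 1 < T p' c' → p' = pc.1 ∧ c' = pc.2) := by
    intro lvl
    by_cases h : I ≤ lvl ∧ lvl < J
    · obtain ⟨p, c, h1, h2⟩ := level hIJ hJm hN2 hcI hcO g1 g4 g5 lvl h.1 h.2
      exact ⟨(p, c), fun _ _ => ⟨h1, h2⟩⟩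
    · exact ⟨(0, 0), fun h1 h2 => absurd ⟨h1, h2⟩ h⟩
  choose sp hsp using hlev
  have hspP : ∀ lvl, I ≤ lvl → lvl < J →
      I ≤ (sp lvl).1 ∧ (sp lvl).1 ≤ lvl ∧ (sp lvl).2 < rl (sp lvl).1 ∧
        lvl + 1 < T (sp lvl).1 (sp lvl).2 :=
    fun lvl h1 h2 => (hsp lvl h1 h2).1
  have hspU : ∀ lvl, I ≤ lvl → lvl < J → ∀ p' c', I ≤ p' → p' ≤ lvl → c' < rl p' →
      lvl + 1 < T p' c' → p' = (sp lvl).1 ∧ c' = (sp lvl).2 :=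
    fun lvl h1 h2 => (hsp lvl h1 h2).2
  have hsp2 : ∀ lvl, I ≤ lvl → lvl < J → (sp lvl).2 = rl (sp lvl).1 - 1 := by
    intro lvl h1 h2
    obtain ⟨ha, hb, hc, hd⟩ := hspP lvl h1 h2
    by_contra hne
    have hc1 : (sp lvl).2 + 1 < rl (sp lvl).1 := by omega
    have hT1 : lvl + 1 < T (sp lvl).1 ((sp lvl).2 + 1) := lt_of_lt_of_le hd (g3 _ _ hc1)
    have := (hspU lvl h1 h2 (sp lvl).1 ((sp lvl).2 + 1) ha hb hc1 hT1).2
    omega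
  have hF1 : ∀ r', I ≤ r' → r' < J → ∀ c, c + 1 < rl r' → T r' c = r' + 1 := by
    intro r' h1 h2 c hc
    have hge := rowge hN2 g1 g4 r' c (by omega)
    by_contra hne
    have hgt : r' + 1 < T r' c := by omega
    have e1 := hspU r' h1 h2 r' c h1 le_rfl (by omega) hgt
    have hT1 : r' + 1 < T r' (c+1) := lt_of_lt_of_le hgt (g3 r' c hc)
    have e2 := hspU r' h1 h2 r' (c+1) h1 le_rfl hc hT1
    omega
  have hF4b : ∀ r', I ≤ r' → r' < J → ¬ T r' (rl r' - 1) = r' + 1 →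
      (sp r').1 = r' ∧ (sp r').2 = rl r' - 1 := by
    intro r' h1 h2 hne
    have hrm : r' < m := by omega
    have hrl : 1 ≤ rl r' := hN5 r' hrm (by omega)
    have hge := rowge hN2 g1 g4 r' (rl r' - 1) (by omega)
    have hgt : r' + 1 < T r' (rl r' - 1) := by omega
    have h := hspU r' h1 h2 r' (rl r' - 1) h1 le_rfl (by omega) hgt
    exact ⟨h.1.symm, h.2.symm⟩
  have hF4b' : ∀ r', I ≤ r' → r' < J → (sp r').1 = r' → ¬ T r' (rl r' - 1) = r' + 1 := by
    intro r' h1 h2 heq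
    obtain ⟨ha, hb, hc, hd⟩ := hspP r' h1 h2
    have h2c : (sp r').2 = rl r' - 1 := by rw [hsp2 r' h1 h2, heq]
    have hd2 := hd
    rw [heq, h2c] at hd2
    omega
  have hF3c : ∀ lvl, I ≤ lvl → lvl + 1 < J →
      ((sp (lvl+1)).1 = (sp lvl).1 ∧ (sp (lvl+1)).2 = (sp lvl).2) ∨ (sp (lvl+1)).1 = lvl + 1 := by
    intro lvl h1 h2
    obtain ⟨ha, hb, hc, hd⟩ := hspP (lvl+1) (by omega) h2
    rcases Nat.lt_or_ge (sp (lvl+1)).1 (lvl+1) with hlt | hge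
    · left
      exact hspU lvl h1 (by omega) (sp (lvl+1)).1 (sp (lvl+1)).2 ha (by omega) hc (by omega)
    · right; omega
  have hF3d : ∀ lvl, I ≤ lvl → lvl + 1 < J → (sp (lvl+1)).1 = lvl + 1 →
      T (sp lvl).1 (sp lvl).2 = lvl + 2 := by
    intro lvl h1 h2 hnew
    obtain ⟨ha, hb, hc, hd⟩ := hspP lvl h1 (by omega)
    by_contra hne
    have hgt : (lvl + 1) + 1 < T (sp lvl).1 (sp lvl).2 := by omega
    have h := hspU (lvl+1) (by omega) h2 (sp lvl).1 (sp lvl).2 ha (by omega) hc hgt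
    omega
  have hF3e : T (sp (J-1)).1 (sp (J-1)).2 = J + 1 := by
    have h1 : I ≤ J - 1 := by omega
    have h2 : J - 1 < J := by omega
    obtain ⟨ha, hb, hc, hd⟩ := hspP (J-1) h1 h2
    by_contra hne
    exact no_big hIJ hJm hN1 hN2 hcO g1 g4 g5 (sp (J-1)).1 (by omega) (by omega)
      (sp (J-1)).2 hc (by omega)
  have hchain : ∀ p, (p = I ∨ p ∈ S) → T p (rl p - 1) = nxt J S p + 1 := by
    intro p hp
    have hbp : I ≤ p ∧ p < J := by
      rcases hp with h | h
      · omega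
      · have := (hSmem p).mp h; omega
    have hsp0 : (sp p).1 = p ∧ (sp p).2 = rl p - 1 := by
      rcases hp with h | h
      · obtain ⟨ha, hb, hc, hd⟩ := hspP p hbp.1 hbp.2
        have e1 : (sp p).1 = p := by omega
        exact ⟨e1, by rw [hsp2 p hbp.1 hbp.2, e1]⟩
      · exact hF4b p hbp.1 hbp.2 ((hSmem p).mp h).2.2
    have htp : p < nxt J S p := nxt_lt hbp.2
    have htJ : nxt J S p ≤ J := nxt_le S p
    have hgap : ∀ x ∈ S, p < x → nxt J S p ≤ x := fun x hx hpx => nxt_le_of_mem hx hpx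
    have hchain2 : ∀ k, p + k ≤ nxt J S p - 1 →
        (sp (p+k)).1 = p ∧ (sp (p+k)).2 = rl p - 1 := by
      intro k
      induction k with
      | zero => intro _; simpa using hsp0
      | succ n ih =>
        intro hk
        have hn := ih (by omega)
        have hlvl1 : I ≤ p + n := by omega
        have hlvl2 : p + n + 1 < J := by omega
        have hstep : p + (n+1) = (p + n) + 1 := by omega
        rw [hstep]
        rcases hF3c (p+n) hlvl1 hlvl2 with ⟨e1, e2⟩ | hnew
        · exact ⟨by omega, by omega⟩
        · exfalso
          have hne := hF4b' (p+n+1) (by omega) hlvl2 hnew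
          have hmem : (p+n+1) ∈ S := (hSmem _).mpr ⟨by omega, by omega, hne⟩
          have := hgap _ hmem (by omega)
          omega
    have hlast := hchain2 (nxt J S p - 1 - p) (by omega)
    rw [show p + (nxt J S p - 1 - p) = nxt J S p - 1 by omega] at hlast
    rcases nxt_mem S p with htS | htJ'
    · have hbt := (hSmem _).mp htS
      have htJ2 : nxt J S p < J := hbt.2.1
      have hspt : (sp (nxt J S p)).1 = nxt J S p :=
        (hF4b (nxt J S p) (by omega) htJ2 hbt.2.2).1
      have hnew2 : (sp (nxt J S p - 1 + 1)).1 = nxt J S p - 1 + 1 := by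
        rw [show nxt J S p - 1 + 1 = nxt J S p by omega]
        exact hspt
      have hd := hF3d (nxt J S p - 1) (by omega) (by omega) hnew2
      rw [hlast.1, hlast.2] at hd
      omega
    · have hd := hF3e
      rw [show J - 1 = nxt J S p - 1 by omega] at hd
      rw [hlast.1, hlast.2] at hd
      omega
  intro r c
  by_cases hcr : c < rl r
  case neg => simp only [tab]; rw [if_neg hcr, g2 r c hcr]
  case pos =>
  have hrm : r < m := by by_contra h; have := hN1 r (by omega); omega
  rcases Nat.lt_or_ge r I with hrI | hIr
  · have hTv := rowabove hIJ hJm hN2 hcO g1 g4 g5 r hrI c hcr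
    have hnsp : ¬ (r = I ∨ r ∈ S) := by
      rintro (h | h)
      · omega
      · have := (hSmem r).mp h; omega
    simp only [tab]
    rw [if_pos hcr, if_neg (by rintro ⟨h, -⟩; exact hnsp h), hTv]
  rcases Nat.lt_or_ge r J with hrJ | hJr
  · have hrl1 : 1 ≤ rl r := hN5 r hrm (by omega)
    by_cases hspr : r = I ∨ r ∈ S
    · by_cases hlastc : c = rl r - 1
      · simp only [tab]
        rw [if_pos hcr, if_pos ⟨hspr, hlastc⟩, hlastc, hchain r hspr]
      · have hc1 : c + 1 < rl r := by omega
        simp only [tab]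
        rw [if_pos hcr, if_neg (by rintro ⟨-, h⟩; exact hlastc h), hF1 r hIr hrJ c hc1]
    · have hrT : T r (rl r - 1) = r + 1 := by
        by_contra hne
        have hrI2 : I < r := by
          rcases Nat.lt_or_ge I r with h | h
          · exact h
          · exact absurd (Or.inl (by omega)) hspr
        exact hspr (Or.inr ((hSmem r).mpr ⟨hrI2, hrJ, hne⟩))
      simp only [tab]
      rw [if_pos hcr, if_neg (by rintro ⟨h, -⟩; exact hspr h)]
      by_cases hlastc : c = rl r - 1
      · rw [hlastc, hrT]
      · exact (hF1 r hIr hrJ c (by omega)).symm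
  rcases Nat.lt_or_ge J r with hJr2 | hJr3
  · have hTv := rowbelow hIJ hJm hN1 hN2 hcO g1 g4 g5 r hJr2 c hcr
    have hnsp : ¬ (r = I ∨ r ∈ S) := by
      rintro (h | h)
      · omega
      · have := (hSmem r).mp h; omega
    simp only [tab]
    rw [if_pos hcr, if_neg (by rintro ⟨h, -⟩; exact hnsp h), hTv]
  · have hrJ : r = J := by omega
    have hTv : T r c = r + 1 := by
      rw [hrJ]
      exact rowJ hIJ hJm hN1 hN2 hcO g1 g4 g5 c (hrJ ▸ hcr)
    have hnsp : ¬ (r = I ∨ r ∈ S) := by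
      rintro (h | h)
      · omega
      · have := (hSmem r).mp h; omega
    simp only [tab]
    rw [if_pos hcr, if_neg (by rintro ⟨h, -⟩; exact hnsp h), hTv]

end Converse
end SSYT


/-- Remark 4.5. -/
theorem ssyt_count_two_pow (m : ℕ) (lam : Fin m → ℕ)
    (hanti : StrictAnti lam) (hpos : ∀ r, 0 < lam r)
    (i j : Fin m) (hij : i < j)
    (rl : ℕ → ℕ)
    (hrl : ∀ r : ℕ, rl r = if h : r < m then
        (if (⟨r, h⟩ : Fin m) = i then lam i + 1
         else if (⟨r, h⟩ : Fin m) = j then lam j - 1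
         else lam ⟨r, h⟩) else 0) :
    Nat.card {T : ℕ → ℕ → ℕ //
      (∀ r c : ℕ, c < rl r → 1 ≤ T r c ∧ T r c ≤ m) ∧
      (∀ r c : ℕ, ¬ c < rl r → T r c = 0) ∧
      (∀ r c : ℕ, c + 1 < rl r → T r c ≤ T r (c + 1)) ∧
      (∀ r c : ℕ, c < rl (r + 1) → T r c < T (r + 1) c) ∧
      (∀ v : Fin m,
        (∑ r ∈ Finset.range m,
          ((Finset.range (rl r)).filter (fun c => T r c = (v : ℕ) + 1)).card) = lam v)}
      = 2 ^ ((j : ℕ) - (i : ℕ) - 1) := by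
  classical
  have hIJ : (i:ℕ) < (j:ℕ) := hij
  have hJm : (j:ℕ) < m := j.isLt
  have hIm : (i:ℕ) < m := i.isLt
  set L : ℕ → ℕ := fun r => if h : r < m then lam ⟨r, h⟩ else 0 with hL
  have hLanti : ∀ a b, a < b → b < m → L b < L a := by
    intro a b hab hbm
    simp only [hL]
    rw [dif_pos hbm, dif_pos (by omega)]
    exact hanti (Fin.mk_lt_mk.mpr hab)
  have hLpos : ∀ r, r < m → 0 < L r := by
    intro r h
    simp only [hL]
    rw [dif_pos h]
    exact hpos _
  have hlamL : ∀ v : Fin m, L (v:ℕ) = lam v := by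
    intro v
    simp only [hL]
    rw [dif_pos v.isLt]
  have key : ∀ r, ∀ h : r < m,
      rl r = if r = (i:ℕ) then L r + 1 else if r = (j:ℕ) then L r - 1 else L r := by
    intro r h
    rw [hrl r, dif_pos h]
    have eL : L r = lam ⟨r, h⟩ := by simp only [hL]; rw [dif_pos h]
    by_cases h1 : r = (i:ℕ)
    · have hf : (⟨r, h⟩ : Fin m) = i := Fin.ext h1
      rw [if_pos hf, if_pos h1, eL, hf]
    · have hf : ¬ (⟨r, h⟩ : Fin m) = i := fun hh => h1 (congrArg Fin.val hh)
      rw [if_neg hf, if_neg h1]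
      by_cases h2 : r = (j:ℕ)
      · have hg : (⟨r, h⟩ : Fin m) = j := Fin.ext h2
        rw [if_pos hg, if_pos h2, eL, hg]
      · have hg : ¬ (⟨r, h⟩ : Fin m) = j := fun hh => h2 (congrArg Fin.val hh)
        rw [if_neg hg, if_neg h2, eL]
  have hN1 : ∀ r, m ≤ r → rl r = 0 := fun r h => by rw [hrl r, dif_neg (by omega)]
  have hN5 : ∀ r, r < m → r ≠ (j:ℕ) → 0 < rl r := by
    intro r h hj
    rw [key r h]
    have := hLpos r h
    split_ifs <;> omega
  have hN2 : ∀ r, rl (r+1) ≤ rl r := by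
    intro r
    by_cases h1 : r + 1 < m
    · have h0 : r < m := by omega
      rw [key r h0, key (r+1) h1]
      have ha := hLanti r (r+1) (by omega) h1
      have hp1 := hLpos (r+1) h1
      split_ifs <;> omega
    · rw [hN1 (r+1) (by omega)]
      exact Nat.zero_le _
  have hN3 : ∀ r, (i:ℕ) ≤ r → r < (j:ℕ) → rl (r+1) < rl r := by
    intro r h1 h2
    have h0 : r < m := by omega
    have h1m : r + 1 < m := by omega
    rw [key r h0, key (r+1) h1m]
    have ha := hLanti r (r+1) (by omega) h1m
    have hp1 := hLpos (r+1) h1m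
    have hp0 := hLpos r h0
    split_ifs <;> omega
  have hcI : L (i:ℕ) + 1 = rl (i:ℕ) := by
    rw [key _ hIm, if_pos rfl]
  have hcJ : L (j:ℕ) = rl (j:ℕ) + 1 := by
    rw [key _ hJm, if_neg (by omega), if_pos rfl]
    have := hLpos (j:ℕ) hJm
    omega
  have hcO : ∀ V, V < m → V ≠ (i:ℕ) → V ≠ (j:ℕ) → L V = rl V := by
    intro V h h1 h2
    rw [key V h, if_neg h1, if_neg h2]
  -- the bijection
  have hgood : ∀ S : Finset ℕ, S ⊆ Finset.Ioo (i:ℕ) (j:ℕ) →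
      ((∀ r c : ℕ, c < rl r → 1 ≤ SSYT.tab (i:ℕ) (j:ℕ) rl S r c ∧ SSYT.tab (i:ℕ) (j:ℕ) rl S r c ≤ m) ∧
      (∀ r c : ℕ, ¬ c < rl r → SSYT.tab (i:ℕ) (j:ℕ) rl S r c = 0) ∧
      (∀ r c : ℕ, c + 1 < rl r → SSYT.tab (i:ℕ) (j:ℕ) rl S r c ≤ SSYT.tab (i:ℕ) (j:ℕ) rl S r (c + 1)) ∧
      (∀ r c : ℕ, c < rl (r + 1) → SSYT.tab (i:ℕ) (j:ℕ) rl S r c < SSYT.tab (i:ℕ) (j:ℕ) rl S (r + 1) c) ∧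
      (∀ v : Fin m,
        (∑ r ∈ Finset.range m,
          ((Finset.range (rl r)).filter (fun c => SSYT.tab (i:ℕ) (j:ℕ) rl S r c = (v : ℕ) + 1)).card) = lam v)) := by
    intro S hS
    refine ⟨fun r c hc => SSYT.tab_good1 hIJ hS hJm hN1 r c hc,
      fun r c hc => SSYT.tab_good2 r c hc,
      fun r c hc => SSYT.tab_good3 hIJ hS r c hc,
      fun r c hc => SSYT.tab_good4 hIJ hN2 hN3 hS r c hc,
      fun v => ?_⟩
    have h5' := SSYT.tab_good5 hIJ hJm hN5 hS L hcI hcJ hcO (v:ℕ) v.isLt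
    rw [← hlamL v]
    exact h5'
  let f : {S : Finset ℕ // S ⊆ Finset.Ioo (i:ℕ) (j:ℕ)} →
      {T : ℕ → ℕ → ℕ //
      (∀ r c : ℕ, c < rl r → 1 ≤ T r c ∧ T r c ≤ m) ∧
      (∀ r c : ℕ, ¬ c < rl r → T r c = 0) ∧
      (∀ r c : ℕ, c + 1 < rl r → T r c ≤ T r (c + 1)) ∧
      (∀ r c : ℕ, c < rl (r + 1) → T r c < T (r + 1) c) ∧
      (∀ v : Fin m,
        (∑ r ∈ Finset.range m,
          ((Finset.range (rl r)).filter (fun c => T r c = (v : ℕ) + 1)).card) = lam v)} :=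
    fun Sp => ⟨SSYT.tab (i:ℕ) (j:ℕ) rl Sp.1, hgood Sp.1 Sp.2⟩
  have hinj : Function.Injective f := by
    rintro ⟨S1, hS1⟩ ⟨S2, hS2⟩ heq
    simp only [f, Subtype.mk.injEq] at heq ⊢
    ext x
    by_cases hx : (i:ℕ) < x ∧ x < (j:ℕ)
    · rw [SSYT.tab_mem hIJ hJm hN5 hS1 x hx.1 hx.2, SSYT.tab_mem hIJ hJm hN5 hS2 x hx.1 hx.2,
        heq]
    · constructor <;> intro hmem
      · exact absurd (Finset.mem_Ioo.mp (hS1 hmem)) hx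
      · exact absurd (Finset.mem_Ioo.mp (hS2 hmem)) hx
  have hsurj : Function.Surjective f := by
    rintro ⟨T, h1, h2, h3, h4, h5⟩
    have g5' : ∀ V, V < m →
        ∑ r ∈ Finset.range m, ((Finset.range (rl r)).filter fun c => T r c = V+1).card = L V := by
      intro V hVm
      exact (h5 ⟨V, hVm⟩).trans (hlamL ⟨V, hVm⟩).symm
    refine ⟨⟨(Finset.Ioo (i:ℕ) (j:ℕ)).filter (fun x => ¬ T x (rl x - 1) = x + 1),
      Finset.filter_subset _ _⟩, ?_⟩
    apply Subtype.ext
    funext r c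
    exact SSYT.converse hIJ hJm hN1 hN2 hN5 hcI hcO h1 h3 h4 g5' h2 r c
  rw [← Nat.card_eq_of_bijective f ⟨hinj, hsurj⟩]
  have e1 : Nat.card {S : Finset ℕ // S ⊆ Finset.Ioo (i:ℕ) (j:ℕ)}
      = Nat.card ((Finset.Ioo (i:ℕ) (j:ℕ)).powerset) :=
    Nat.card_congr (Equiv.subtypeEquivRight (fun S => (Finset.mem_powerset).symm))
  rw [e1, Nat.card_eq_finsetCard, Finset.card_powerset, Nat.card_Ioo]
end

section
/- If a multiset A of ≤2-part partitions with total size N is not nested—i.e., some pair {λ, μ} ⊆ A satisfies one of: (1) λ = (λ1 ≥ λ2 > 0), μ = (μ1 ≥ μ2 > 0) with λ1 > μ1 ≥ λ2 > μ2; (2) λ = (λ1 > λ2 > 0), μ = (μ1) with λ1 ≥ μ1 ≥ λ2; (3) both λ and μ have one part—then s_A is a sum of two products s_{B} + s_{C} with B, C ∈ SP_N^2 and B, C ≠ A; in particular A is not extreme in the cone C_N^2. -/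
open MvPolynomial

/-- `h n` for `n : ℤ`, with `h 0 = 1`, `h n = 0` for `n < 0`, and the `h n` for
`n > 0` algebraically independent variables. -/
noncomputable def hz (n : ℤ) : MvPolynomial ℕ ℤ :=
  if n < 0 then 0 else if n = 0 then 1 else X n.toNat

/-- The multiset of all parts of a multiset of (≤ 2)-part partitions; a pair `(a, b)`
with `b = 0` encodes the one-part partition `(a)`. -/
def partsOf (A : Multiset (ℕ × ℕ)) : Multiset ℕ :=
  A.bind fun p => if p.2 = 0 then {p.1} else {p.1, p.2}

/-- `s_{(a,b)} = h_a h_b − h_{a+1} h_{b−1}` (Jacobi–Trudi for ≤ 2 rows). -/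
noncomputable def s2 (p : ℕ × ℕ) : MvPolynomial ℕ ℤ :=
  hz p.1 * hz p.2 - hz ((p.1 : ℤ) + 1) * hz ((p.2 : ℤ) - 1)

/-- `s_A = ∏_{ρ ∈ A} s_ρ`. -/
noncomputable def sProd (A : Multiset (ℕ × ℕ)) : MvPolynomial ℕ ℤ :=
  (A.map s2).prod

/-!
A non-nested `A` contains a pair `{λ, μ}` to which a Jacobi–Trudi syzygy
`s_λ s_μ = s_S + s_T` applies, where `S` and `T` are pairs of partitions of the same total
size as `{λ, μ}`, each containing a nonempty partition outside `{λ, μ}`. Replacing `{λ, μ}`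
by `S`, resp. `T`, in `A` gives `B ≠ A`, resp. `C ≠ A`, with `s_A = s_B + s_C`.
Allowing empty partitions (`s_∅ = 1`), the paper's four syzygies reduce to two: the second
is the first with `μ₂ = 0`, and the fourth is the third with `λ₂ = 0`.
-/

lemma Multiset.pair_le_of_ne {α : Type*} {p q : α} {A : Multiset α} (hpq : p ≠ q) (hp : p ∈ A)
    (hq : q ∈ A) : {p, q} ≤ A := by
  rw [Multiset.insert_eq_cons, Multiset.cons_le_of_notMem (by simpa using hpq)]
  exact ⟨hp, Multiset.singleton_le.mpr hq⟩

lemma Multiset.exists_pair_le_of_two_le_countP {α : Type*} {P : α → Prop} [DecidablePred P]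
    {A : Multiset α} (h : 2 ≤ A.countP P) : ∃ p q, {p, q} ≤ A ∧ P p ∧ P q := by
  rw [Multiset.countP_eq_card_filter] at h
  obtain ⟨S, hS⟩ := Multiset.card_pos_iff_exists_mem.mp <| by
    rw [Multiset.card_powersetCard]
    exact Nat.choose_pos h
  obtain ⟨hSA, hS2⟩ := Multiset.mem_powersetCard.mp hS
  obtain ⟨p, q, rfl⟩ := Multiset.card_eq_two.mp hS2
  have hP : ∀ x ∈ ({p, q} : Multiset α), P x := fun x hx =>
    Multiset.of_mem_filter (Multiset.mem_of_le hSA hx)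
  exact ⟨p, q, hSA.trans (Multiset.filter_le _ _), hP p (by simp), hP q (by simp)⟩

lemma hz_zero : hz 0 = 1 := by simp [hz]

lemma hz_neg_one : hz (-1) = 0 := by simp [hz]

lemma s2_zero : s2 0 = 1 := by
  simp [s2, hz_zero, hz_neg_one]

lemma s2_mul_s2_eq_of_one_le_snd (a b c d : ℕ) (hb : 1 ≤ b) :
    s2 (a, b) * s2 (c, d) = s2 (a, d) * s2 (c, b) + s2 (a, c + 1) * s2 (b - 1, d) := by
  simp only [s2]
  push_cast [hb]
  ring_nf

lemma s2_mul_s2_single_eq_of_one_le (a b c : ℕ) (hc : 1 ≤ c) :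
    s2 (a, b) * s2 (c, 0) = s2 (b, 0) * s2 (a, c) + s2 (a + 1, 0) * s2 (c - 1, b) := by
  simp only [s2, Nat.cast_zero, zero_sub, hz_zero, hz_neg_one]
  push_cast [hc]
  ring_nf

@[to_additive]
lemma prod_map_filter_ne_zero {M : Type*} [CommMonoid M] (f : ℕ × ℕ → M) (hf : f 0 = 1)
    (S : Multiset (ℕ × ℕ)) : ((S.filter (· ≠ 0)).map f).prod = (S.map f).prod := by
  induction S using Multiset.induction_on with
  | empty => rfl
  | cons p S ih =>
    by_cases hp : p = 0
    · simp [Multiset.filter_cons_of_neg, hp, hf, ih]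
    · simp [Multiset.filter_cons_of_pos, hp, ih]

lemma sProd_add (A B : Multiset (ℕ × ℕ)) : sProd (A + B) = sProd A * sProd B := by
  simp [sProd]

lemma sProd_pair (p q : ℕ × ℕ) : sProd {p, q} = s2 p * s2 q := by
  simp [sProd]

lemma sum_partsOf_add (A B : Multiset (ℕ × ℕ)) :
    (partsOf (A + B)).sum = (partsOf A).sum + (partsOf B).sum := by
  simp [partsOf, Multiset.add_bind]

lemma sum_partsOf (M : Multiset (ℕ × ℕ)) :
    (partsOf M).sum = (M.map fun p => p.1 + p.2).sum := by
  rw [partsOf, Multiset.sum_bind]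
  congr 1
  refine Multiset.map_congr rfl fun p _ => ?_
  split_ifs with h <;> simp [h]

lemma sum_partsOf_filter_ne_zero (M : Multiset (ℕ × ℕ)) :
    (partsOf (M.filter (· ≠ 0))).sum = (partsOf M).sum := by
  simp only [sum_partsOf]
  exact sum_map_filter_ne_zero _ rfl M

lemma sProd_filter_ne_zero (M : Multiset (ℕ × ℕ)) :
    sProd (M.filter (· ≠ 0)) = sProd M :=
  prod_map_filter_ne_zero s2 s2_zero M

/-- The paper's `SP_N^2`. -/
def SP2 (N : ℕ) : Set (Multiset (ℕ × ℕ)) :=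
  {A | (∀ p ∈ A, p.2 ≤ p.1 ∧ 0 < p.1) ∧ (partsOf A).sum = N}

/-- Entries of `S` equal to the empty partition `0 = (0, 0)` are discarded when `S` replaces
`P` (see `IsReplacement.filter_add_mem_SP2`); they contribute `s_∅ = 1`. -/
def IsReplacement (P S : Multiset (ℕ × ℕ)) : Prop :=
  (∀ p ∈ S, p.2 ≤ p.1) ∧ (partsOf S).sum = (partsOf P).sum ∧ ∃ x ∈ S, x ≠ 0 ∧ x ∉ P

def Splits (P : Multiset (ℕ × ℕ)) : Prop :=
  ∃ S T, IsReplacement P S ∧ IsReplacement P T ∧ sProd P = sProd S + sProd T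

namespace IsReplacement

variable {N : ℕ} {P S R : Multiset (ℕ × ℕ)}

lemma filter_add_mem_SP2 (hS : IsReplacement P S) (hPR : P + R ∈ SP2 N) :
    S.filter (· ≠ 0) + R ∈ SP2 N := by
  obtain ⟨hval, hsize⟩ := hPR
  refine ⟨fun p hp => ?_, ?_⟩
  · rcases Multiset.mem_add.mp hp with hp | hp
    · obtain ⟨hpS, hp0⟩ := Multiset.mem_filter.mp hp
      refine ⟨hS.1 p hpS, Nat.pos_of_ne_zero fun h => hp0 ?_⟩
      exact Prod.ext h (Nat.le_zero.mp (h ▸ hS.1 p hpS))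
    · exact hval p (Multiset.mem_add.mpr (Or.inr hp))
  · rwa [sum_partsOf_add, sum_partsOf_filter_ne_zero, hS.2.1, ← sum_partsOf_add]

lemma filter_add_ne (hS : IsReplacement P S) : S.filter (· ≠ 0) + R ≠ P + R := by
  obtain ⟨x, hxS, hx0, hxP⟩ := hS.2.2
  intro h
  exact hxP (add_left_injective R h ▸ Multiset.mem_filter.mpr ⟨hxS, hx0⟩)

end IsReplacement

lemma Splits.exists_eq_add {N : ℕ} {P A : Multiset (ℕ × ℕ)} (hP : Splits P) (hPA : P ≤ A)
    (hA : A ∈ SP2 N) :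
    ∃ B ∈ SP2 N, ∃ C ∈ SP2 N, B ≠ A ∧ C ≠ A ∧ sProd A = sProd B + sProd C := by
  obtain ⟨R, rfl⟩ := Multiset.le_iff_exists_add.mp hPA
  obtain ⟨S, T, hS, hT, hST⟩ := hP
  refine ⟨_, hS.filter_add_mem_SP2 hA, _, hT.filter_add_mem_SP2 hA, hS.filter_add_ne,
    hT.filter_add_ne, ?_⟩
  rw [sProd_add, sProd_add, sProd_add, sProd_filter_ne_zero, sProd_filter_ne_zero, hST, add_mul]

lemma splits_pair_of_interleave {p q : ℕ × ℕ} (hdb : q.2 < p.2) (hbc : p.2 ≤ q.1)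
    (hca : q.1 < p.1) : Splits {p, q} := by
  obtain ⟨a, b⟩ := p
  obtain ⟨c, d⟩ := q
  dsimp only at hdb hbc hca
  refine ⟨{(a, d), (c, b)}, {(a, c + 1), (b - 1, d)}, ?_, ?_, ?_⟩
  · refine ⟨by simp; omega, by simp [sum_partsOf]; omega, (a, d), by simp, ?_⟩
    simp [Prod.ext_iff]; omega
  · refine ⟨by simp; omega, by simp [sum_partsOf]; omega, (a, c + 1), by simp, ?_⟩
    simp [Prod.ext_iff]; omega
  · simp only [sProd_pair]
    exact s2_mul_s2_eq_of_one_le_snd a b c d (by omega)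

lemma splits_pair_of_one_part {p q : ℕ × ℕ} (hd : q.2 = 0) (hbc : p.2 < q.1)
    (hca : q.1 ≤ p.1) : Splits {p, q} := by
  obtain ⟨a, b⟩ := p
  obtain ⟨c, d⟩ := q
  dsimp only at hd hbc hca
  subst hd
  refine ⟨{(b, 0), (a, c)}, {(a + 1, 0), (c - 1, b)}, ?_, ?_, ?_⟩
  · refine ⟨by simp; omega, by simp [sum_partsOf]; omega, (a, c), by simp, ?_⟩
    simp [Prod.ext_iff]; omega
  · refine ⟨by simp; omega, by simp [sum_partsOf]; omega, (a + 1, 0), by simp, ?_⟩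
    simp [Prod.ext_iff]; omega
  · simp only [sProd_pair]
    exact s2_mul_s2_single_eq_of_one_le a b c (by omega)

/-- Theorem 3.2: if `A ∈ SP_N^2` is not nested — some pair of members interleaves
(condition (1)), or a one-part member is caught inside a two-part member
(condition (2)), or there are two one-part members (condition (3)) — then
`s_A = s_B + s_C` for some `B, C ∈ SP_N^2` with `B ≠ A ≠ C`; in particular `A` is
not extreme in the cone of log concavity `C_N^2`. -/
theorem not_nested_not_extreme (N : ℕ) (A : Multiset (ℕ × ℕ))
    (hval : ∀ p ∈ A, p.2 ≤ p.1 ∧ 0 < p.1) (hsize : (partsOf A).sum = N)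
    (hnot :
      (∃ p ∈ A, ∃ q ∈ A,
        (0 < q.2 ∧ p.1 > q.1 ∧ q.1 ≥ p.2 ∧ p.2 > q.2) ∨
        (p.1 > p.2 ∧ 0 < p.2 ∧ q.2 = 0 ∧ p.1 ≥ q.1 ∧ q.1 ≥ p.2)) ∨
      2 ≤ A.countP (fun p => p.2 = 0)) :
    ∃ B C : Multiset (ℕ × ℕ),
      (∀ p ∈ B, p.2 ≤ p.1 ∧ 0 < p.1) ∧ (partsOf B).sum = N ∧ B ≠ A ∧
      (∀ p ∈ C, p.2 ≤ p.1 ∧ 0 < p.1) ∧ (partsOf C).sum = N ∧ C ≠ A ∧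
      sProd A = sProd B + sProd C := by
  obtain ⟨P, hPA, hP⟩ : ∃ P ≤ A, Splits P := by
    rcases hnot with ⟨p, hp, q, hq, ⟨-, h1, h2, h3⟩ | ⟨hlt, hp2, hq2, h1, h2⟩⟩ | hcount
    · refine ⟨_, Multiset.pair_le_of_ne ?_ hp hq, splits_pair_of_interleave h3 h2 h1⟩
      rintro rfl; omega
    · refine ⟨_, Multiset.pair_le_of_ne ?_ hp hq, ?_⟩
      · rintro rfl; omega
      rcases h1.lt_or_eq with h1 | h1
      · exact splits_pair_of_interleave (by omega) h2 h1
      · exact splits_pair_of_one_part hq2 (by omega) h1.le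
    · obtain ⟨p, q, hpqA, hp2, hq2⟩ := Multiset.exists_pair_le_of_two_le_countP hcount
      have hp1 := (hval p (Multiset.mem_of_le hpqA (by simp))).2
      have hq1 := (hval q (Multiset.mem_of_le hpqA (by simp))).2
      rcases le_total q.1 p.1 with h | h
      · exact ⟨_, hpqA, splits_pair_of_one_part hq2 (by omega) h⟩
      · exact ⟨_, Multiset.pair_comm p q ▸ hpqA, splits_pair_of_one_part hp2 (by omega) h⟩
  obtain ⟨B, hB, C, hC, hBA, hCA, hBC⟩ := hP.exists_eq_add hPA ⟨hval, hsize⟩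
  exact ⟨B, C, hB.1, hB.2, hBA, hC.1, hC.2, hCA, hBC⟩
end

section
/- Let λ be a partition with an odd number of parts and A ∈ SSP_λ. Define A↑ by adding 1 to each part of each partition in A and adjoining a new part equal to 1 to the unique one-part member of A. Then A↑ ∈ SSP_{λ↑}, where λ↑ = (λ1+1, ..., λm+1, 1). -/
/-- `A` is nested: no interleaving pair of two-part members, no one-part member
caught inside a two-part member, and at most one one-part member. -/
def Nested (A : Multiset (ℕ × ℕ)) : Prop :=
  (∀ p ∈ A, ∀ q ∈ A, ¬(0 < q.2 ∧ p.1 > q.1 ∧ q.1 ≥ p.2 ∧ p.2 > q.2)) ∧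
  (∀ p ∈ A, ∀ q ∈ A, ¬(p.1 > p.2 ∧ 0 < p.2 ∧ q.2 = 0 ∧ p.1 ≥ q.1 ∧ q.1 ≥ p.2)) ∧
  A.countP (fun p => p.2 = 0) ≤ 1

/-- `A↑`: add 1 to each part of each member of `A`, and adjoin a new part `1` to the
unique one-part member. -/
def upA (A : Multiset (ℕ × ℕ)) : Multiset (ℕ × ℕ) :=
  A.map fun p => if p.2 = 0 then (p.1 + 1, 1) else (p.1 + 1, p.2 + 1)

/-!
Every member of `A↑` has two parts, so only the first nesting condition has to be checked. For
two members that were two-part in `A` it is the same condition shifted by one. The former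
singleton `(c + 1, 1)` has the smallest possible lower part, so it can interleave with some
`(a + 1, b + 1)` only as `a > c ≥ b > 0`, which is the singleton `(c)` caught inside `(a, b)`,
forbidden in `A`. The parts of `A↑` are the shifted parts of `A` plus one new part `1`.
-/

lemma snd_pos_of_mem_upA {A : Multiset (ℕ × ℕ)} {P : ℕ × ℕ} (hP : P ∈ upA A) :
    0 < P.2 := by
  obtain ⟨p, -, rfl⟩ := Multiset.mem_map.mp hP
  split_ifs <;> simp

lemma countP_snd_eq_zero_upA (A : Multiset (ℕ × ℕ)) :
    (upA A).countP (fun p => p.2 = 0) = 0 :=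
  Multiset.countP_eq_zero.mpr fun _ hP => (snd_pos_of_mem_upA hP).ne'

lemma snd_le_fst_and_fst_pos_of_mem_upA {A : Multiset (ℕ × ℕ)}
    (hA : ∀ p ∈ A, p.2 ≤ p.1) :
    ∀ P ∈ upA A, P.2 ≤ P.1 ∧ 0 < P.1 := by
  intro P hP
  obtain ⟨p, hp, rfl⟩ := Multiset.mem_map.mp hP
  have := hA p hp
  split_ifs <;> simp [this]

lemma nested_upA {A : Multiset (ℕ × ℕ)} (hA : Nested A) : Nested (upA A) := by
  obtain ⟨hinter, hcaught, -⟩ := hA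
  refine ⟨?_, fun _ _ Q hQ h => (snd_pos_of_mem_upA hQ).ne' h.2.2.1, ?_⟩
  · intro P hP Q hQ
    obtain ⟨p, hp, rfl⟩ := Multiset.mem_map.mp hP
    obtain ⟨q, hq, rfl⟩ := Multiset.mem_map.mp hQ
    have hpq_inter := hinter p hp q hq
    have hpq_caught := hcaught p hp q hq
    by_cases hp0 : p.2 = 0 <;> by_cases hq0 : q.2 = 0 <;> simp only [hp0, hq0, if_true,
      if_false] <;> omega
  · rw [countP_snd_eq_zero_upA]
    exact zero_le_one

lemma partsOf_upA (A : Multiset (ℕ × ℕ)) :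
    partsOf (upA A) = (partsOf A).map (· + 1)
      + Multiset.replicate (A.countP (fun p => p.2 = 0)) 1 := by
  induction A using Multiset.induction with
  | empty => simp [partsOf, upA]
  | cons p A ih =>
    simp only [partsOf, upA, Multiset.map_cons, Multiset.cons_bind, Multiset.map_add,
      Multiset.countP_cons] at ih ⊢
    rw [ih]
    by_cases h : p.2 = 0
    · simp [h, Multiset.replicate_succ, Multiset.cons_swap]
    · simp [h, Multiset.insert_eq_cons]

/-- If `λ` has an odd number of parts and `A ∈ SSP_λ`, then `A↑ ∈ SSP_{λ↑}`, where
`λ↑ = (λ1+1, …, λm+1, 1)`. -/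
theorem upA_mem_SSP (lam : Multiset ℕ) (A : Multiset (ℕ × ℕ))
    (hval : ∀ p ∈ A, p.2 ≤ p.1 ∧ 0 < p.1)
    (hparts : partsOf A = lam) (hnested : Nested A)
    (hodd : A.countP (fun p => p.2 = 0) = 1) :
    (∀ p ∈ upA A, p.2 ≤ p.1 ∧ 0 < p.1) ∧
    Nested (upA A) ∧
    partsOf (upA A) = lam.map (· + 1) + {1} := by
  refine ⟨snd_le_fst_and_fst_pos_of_mem_upA fun p hp => (hval p hp).1, nested_upA hnested, ?_⟩
  rw [partsOf_upA, hparts, hodd]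
  rfl
end
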